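/- arXiv:1504.04189 — 12 statements merged into one kernel-verified Lean document; each statement's English description precedes it below -/
import Mathlib

section
/- If an open set Ω ⊆ ℝⁿ satisfies the ε-ball condition, then the map assigning to each boundary point x its direction vector d_x is (1/ε)-Lipschitz: for all x, y ∈ ∂Ω, ‖d_x − d_y‖ ≤ (1/ε)‖x − y‖. In particular, d_x is uniquely determined by x. -/
/-!
The inner ball at `x` and the outer ball at `y` are disjoint, so their centres are at distance
at least `2ε`: `2ε ≤ ‖(x - y) - ε (d_x + d_y)‖`, and symmetrically
`2ε ≤ ‖(x - y) + ε (d_x + d_y)‖`. Adding the squares and applying the parallelogram law twice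
(once to `x - y ± ε (d_x + d_y)`, once to the unit vectors `d_x ± d_y`) leaves
`ε² ‖d_x - d_y‖² ≤ ‖x - y‖²`.
-/

open Metric

theorem add_le_dist_of_ball_subset_of_ball_subset_compl_closure {E : Type*}
    [NormedAddCommGroup E] [NormedSpace ℝ E] {Ω : Set E} {c₁ c₂ : E} {r₁ r₂ : ℝ}
    (hr₁ : 0 < r₁) (hr₂ : 0 < r₂) (h₁ : ball c₁ r₁ ⊆ Ω) (h₂ : ball c₂ r₂ ⊆ (closure Ω)ᶜ) :
    r₁ + r₂ ≤ dist c₁ c₂ :=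
  (disjoint_ball_ball_iff hr₁ hr₂).1 <|
    (disjoint_compl_right.mono_left subset_closure).mono h₁ h₂

theorem mul_norm_sub_le_norm_of_two_mul_le_norm_sub_smul_add {E : Type*}
    [NormedAddCommGroup E] [InnerProductSpace ℝ E] {a u v : E} {ε : ℝ} (hε : 0 ≤ ε)
    (hu : ‖u‖ = 1) (hv : ‖v‖ = 1) (h_sub : 2 * ε ≤ ‖a - ε • (u + v)‖)
    (h_add : 2 * ε ≤ ‖a + ε • (u + v)‖) : ε * ‖u - v‖ ≤ ‖a‖ := by
  have hpar_a := parallelogram_law_with_norm ℝ a (ε • (u + v))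
  have hpar_uv := parallelogram_law_with_norm ℝ u v
  rw [norm_smul, Real.norm_of_nonneg hε] at hpar_a
  rw [hu, hv] at hpar_uv
  have hsq_sub := pow_le_pow_left₀ (by positivity) h_sub 2
  have hsq_add := pow_le_pow_left₀ (by positivity) h_add 2
  have hsq : (ε * ‖u - v‖) ^ 2 ≤ ‖a‖ ^ 2 := by nlinarith
  exact pow_le_pow_iff_left₀ (by positivity) (norm_nonneg a) two_ne_zero |>.1 hsq

theorem stmt_0_general {n : ℕ} (ε : ℝ) (hε : 0 < ε)
    (Ω : Set (EuclideanSpace ℝ (Fin n)))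
    (x y : EuclideanSpace ℝ (Fin n))
    (dx dy : EuclideanSpace ℝ (Fin n)) (hdx : ‖dx‖ = 1) (hdy : ‖dy‖ = 1)
    (hx1 : ball (x - ε • dx) ε ⊆ Ω) (hx2 : ball (x + ε • dx) ε ⊆ (closure Ω)ᶜ)
    (hy1 : ball (y - ε • dy) ε ⊆ Ω) (hy2 : ball (y + ε • dy) ε ⊆ (closure Ω)ᶜ) :
    ‖dx - dy‖ ≤ (1 / ε) * ‖x - y‖ := by
  have h_sub : 2 * ε ≤ ‖(x - y) - ε • (dx + dy)‖ := by
    have := add_le_dist_of_ball_subset_of_ball_subset_compl_closure hε hε hx1 hy2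
    rwa [← two_mul, dist_eq_norm, show (x - ε • dx) - (y + ε • dy) = (x - y) - ε • (dx + dy) by
      module] at this
  have h_add : 2 * ε ≤ ‖(x - y) + ε • (dx + dy)‖ := by
    have := add_le_dist_of_ball_subset_of_ball_subset_compl_closure hε hε hy1 hx2
    rwa [← two_mul, dist_eq_norm', show (x + ε • dx) - (y - ε • dy) = (x - y) + ε • (dx + dy) by
      module] at this
  rw [one_div_mul_eq_div, le_div_iff₀' hε]
  exact mul_norm_sub_le_norm_of_two_mul_le_norm_sub_smul_add hε.le hdx hdy h_sub h_add

/-- If an open set `Ω ⊆ ℝⁿ` satisfies the ε-ball condition, then the direction vectors at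
boundary points satisfy `‖d_x − d_y‖ ≤ (1/ε)‖x − y‖`; in particular (`x = y`) the direction
vector at a boundary point is unique. -/
theorem stmt_0 {n : ℕ} (hn : 2 ≤ n) (ε : ℝ) (hε : 0 < ε)
    (Ω : Set (EuclideanSpace ℝ (Fin n))) (hΩ : IsOpen Ω)
    (x y : EuclideanSpace ℝ (Fin n)) (hx : x ∈ frontier Ω) (hy : y ∈ frontier Ω)
    (dx dy : EuclideanSpace ℝ (Fin n)) (hdx : ‖dx‖ = 1) (hdy : ‖dy‖ = 1)
    (hx1 : ball (x - ε • dx) ε ⊆ Ω) (hx2 : ball (x + ε • dx) ε ⊆ (closure Ω)ᶜ)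
    (hy1 : ball (y - ε • dy) ε ⊆ Ω) (hy2 : ball (y + ε • dy) ε ⊆ (closure Ω)ᶜ) :
    ‖dx - dy‖ ≤ (1 / ε) * ‖x - y‖ :=
  stmt_0_general ε hε Ω x y dx dy hdx hdy hx1 hx2 hy1 hy2
end

section
/- If an open set Ω ⊆ ℝⁿ satisfies the ε-ball condition, then for every pair of boundary points a, x ∈ ∂Ω one has |⟨x − a, d_a⟩| ≤ ‖x − a‖²/(2ε). -/
/-!
A boundary point `x` of the open set `Ω` lies in `closure Ω \ Ω`, hence outside both tangent balls
`B_ε(a ∓ ε d)`. Expanding `ε² ≤ ‖(x - a) ± ε d‖²` gives `∓ 2ε ⟪x - a, d⟫ ≤ ‖x - a‖²`.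
-/

open Metric
open scoped RealInnerProductSpace

section InnerProductSpace

variable {E : Type*} [NormedAddCommGroup E] [InnerProductSpace ℝ E]

lemma neg_inner_le_of_le_norm_add_smul {v d : E} {ε : ℝ} (hd : ‖d‖ = 1) (hε : 0 < ε)
    (h : ε ≤ ‖v + ε • d‖) : -⟪v, d⟫ ≤ ‖v‖ ^ 2 / (2 * ε) := by
  have hsq : ‖v + ε • d‖ ^ 2 = ‖v‖ ^ 2 + 2 * (ε * ⟪v, d⟫) + ε ^ 2 := by
    rw [norm_add_sq_real, real_inner_smul_right, norm_smul, hd, Real.norm_of_nonneg hε.le,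
      mul_one]
  have hε_sq : ε ^ 2 ≤ ‖v + ε • d‖ ^ 2 := pow_le_pow_left₀ hε.le h 2
  rw [le_div_iff₀ (by positivity)]
  nlinarith

lemma abs_inner_sub_le_of_le_dist {x a d : E} {ε : ℝ} (hd : ‖d‖ = 1) (hε : 0 < ε)
    (h₁ : ε ≤ dist x (a - ε • d)) (h₂ : ε ≤ dist x (a + ε • d)) :
    |⟪x - a, d⟫| ≤ ‖x - a‖ ^ 2 / (2 * ε) := by
  rw [dist_eq_norm, sub_sub_eq_add_sub, add_sub_right_comm] at h₁
  rw [dist_eq_norm, ← sub_sub, sub_eq_add_neg _ (ε • d), ← smul_neg] at h₂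
  have hle := neg_inner_le_of_le_norm_add_smul hd hε h₁
  have hge := neg_inner_le_of_le_norm_add_smul (by rwa [norm_neg]) hε h₂
  rw [inner_neg_right, neg_neg] at hge
  exact abs_le.2 ⟨by linarith, hge⟩

end InnerProductSpace

lemma le_dist_of_ball_subset_of_notMem {X : Type*} [PseudoMetricSpace X] {s : Set X} {c x : X}
    {r : ℝ} (hs : ball c r ⊆ s) (hx : x ∉ s) : r ≤ dist x c :=
  not_lt.1 fun h => hx (hs (mem_ball.2 h))

theorem stmt_1_general {n : ℕ} (ε : ℝ) (hε : 0 < ε)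
    (Ω : Set (EuclideanSpace ℝ (Fin n))) (hΩ : IsOpen Ω)
    (a x : EuclideanSpace ℝ (Fin n)) (hx : x ∈ frontier Ω)
    (da : EuclideanSpace ℝ (Fin n)) (hda : ‖da‖ = 1)
    (ha1 : ball (a - ε • da) ε ⊆ Ω) (ha2 : ball (a + ε • da) ε ⊆ (closure Ω)ᶜ) :
    |(⟪x - a, da⟫)| ≤ ‖x - a‖ ^ 2 / (2 * ε) := by
  rw [hΩ.frontier_eq] at hx
  exact abs_inner_sub_le_of_le_dist hda hε (le_dist_of_ball_subset_of_notMem ha1 hx.2)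
    (le_dist_of_ball_subset_of_notMem ha2 (not_not.2 hx.1))

/-- If an open set `Ω ⊆ ℝⁿ` satisfies the ε-ball condition, then for boundary points `a, x`
one has `|⟨x − a, d_a⟩| ≤ ‖x − a‖²/(2ε)`. -/
theorem stmt_1 {n : ℕ} (hn : 2 ≤ n) (ε : ℝ) (hε : 0 < ε)
    (Ω : Set (EuclideanSpace ℝ (Fin n))) (hΩ : IsOpen Ω)
    (a x : EuclideanSpace ℝ (Fin n)) (ha : a ∈ frontier Ω) (hx : x ∈ frontier Ω)
    (da : EuclideanSpace ℝ (Fin n)) (hda : ‖da‖ = 1)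
    (ha1 : ball (a - ε • da) ε ⊆ Ω) (ha2 : ball (a + ε • da) ε ⊆ (closure Ω)ᶜ) :
    |(⟪x - a, da⟫)| ≤ ‖x - a‖ ^ 2 / (2 * ε) :=
  stmt_1_general ε hε Ω hΩ a x hx da hda ha1 ha2
end

section
/- Let Ω ⊆ ℝⁿ be open and satisfy the ε-ball condition, let a, x ∈ ∂Ω, and set (x − a)' = (x − a) − ⟨x − a, d_a⟩ d_a. If ‖(x − a)'‖ < ε and |⟨x − a, d_a⟩| < ε, then ‖x − a‖²/(2ε) ≤ ε − √(ε² − ‖(x − a)'‖²). -/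
/-!
A boundary point `x` lies outside both tangent balls at `a`, so `‖v ± ε d‖ ≥ ε` for `v = x - a`,
that is `2ε|t| ≤ ‖v‖²` with `t = ⟪v, d⟫`. Since `‖v‖² = ‖v'‖² + t²` for `v' = v - t d`, this says
`(ε - |t|)² ≥ ε² - ‖v'‖² = s²`, hence `|t| ≤ ε - s` and `‖v‖² = ε² - s² + t² ≤ 2ε(ε - s)`.
-/

open Metric
open scoped RealInnerProductSpace

section InnerProductSpace

variable {E : Type*} [NormedAddCommGroup E] [InnerProductSpace ℝ E]

theorem norm_sub_inner_smul_sq_of_norm_eq_one {d : E} (hd : ‖d‖ = 1) (v : E) :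
    ‖v - ⟪v, d⟫ • d‖ ^ 2 = ‖v‖ ^ 2 - ⟪v, d⟫ ^ 2 := by
  rw [norm_sub_sq_real, real_inner_smul_right, norm_smul, hd, Real.norm_eq_abs, mul_one, sq_abs]
  ring

theorem two_mul_abs_inner_le_norm_sq_of_notMem_balls {a x d : E} {ε : ℝ} (hε : 0 ≤ ε)
    (hd : ‖d‖ = 1) (hminus : x ∉ ball (a - ε • d) ε) (hplus : x ∉ ball (a + ε • d) ε) :
    2 * ε * |⟪x - a, d⟫| ≤ ‖x - a‖ ^ 2 := by
  have hεd : ‖ε • d‖ = ε := by rw [norm_smul, hd, Real.norm_of_nonneg hε, mul_one]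
  have hminus' : ε ^ 2 ≤ ‖(x - a) + ε • d‖ ^ 2 := by
    rw [mem_ball, not_lt, dist_eq_norm, sub_sub_eq_add_sub, add_sub_right_comm] at hminus
    exact pow_le_pow_left₀ hε hminus 2
  have hplus' : ε ^ 2 ≤ ‖(x - a) - ε • d‖ ^ 2 := by
    rw [mem_ball, not_lt, dist_eq_norm, sub_add_eq_sub_sub] at hplus
    exact pow_le_pow_left₀ hε hplus 2
  rw [norm_add_sq_real, real_inner_smul_right, hεd] at hminus'
  rw [norm_sub_sq_real, real_inner_smul_right, hεd] at hplus'
  rcases abs_cases ⟪x - a, d⟫ with ⟨h, -⟩ | ⟨h, -⟩ <;> rw [h] <;> linarith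

end InnerProductSpace

theorem add_sq_div_le_sub_sqrt {ε r t : ℝ} (hε : 0 < ε) (hr : r ≤ ε ^ 2) (ht : |t| ≤ ε)
    (h : 2 * ε * |t| ≤ r + t ^ 2) :
    (r + t ^ 2) / (2 * ε) ≤ ε - √(ε ^ 2 - r) := by
  set s := √(ε ^ 2 - r)
  have hs_sq : s ^ 2 = ε ^ 2 - r := Real.sq_sqrt (by linarith)
  have hs_le : s ≤ ε - |t| :=
    Real.sqrt_le_iff.mpr ⟨by linarith, by nlinarith [sq_abs t]⟩
  have ht_sq : t ^ 2 ≤ (ε - s) ^ 2 := by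
    rw [← sq_abs t]
    exact pow_le_pow_left₀ (abs_nonneg t) (by linarith) 2
  rw [div_le_iff₀ (by positivity)]
  nlinarith

theorem stmt_2_general {n : ℕ} (ε : ℝ) (hε : 0 < ε)
    (Ω : Set (EuclideanSpace ℝ (Fin n))) (hΩ : IsOpen Ω)
    (a x : EuclideanSpace ℝ (Fin n)) (hx : x ∈ frontier Ω)
    (da : EuclideanSpace ℝ (Fin n)) (hda : ‖da‖ = 1)
    (ha1 : ball (a - ε • da) ε ⊆ Ω) (ha2 : ball (a + ε • da) ε ⊆ (closure Ω)ᶜ)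
    (p : EuclideanSpace ℝ (Fin n)) (hp : p = (x - a) - ⟪x - a, da⟫ • da)
    (hp' : ‖p‖ < ε) (hsc : |(⟪x - a, da⟫)| < ε) :
    ‖x - a‖ ^ 2 / (2 * ε) ≤ ε - Real.sqrt (ε ^ 2 - ‖p‖ ^ 2) := by
  rw [hΩ.frontier_eq] at hx
  obtain ⟨hx_closure, hx_notMem⟩ := hx
  have hsep := two_mul_abs_inner_le_norm_sq_of_notMem_balls hε.le hda
    (fun h ↦ hx_notMem (ha1 h)) (fun h ↦ ha2 h hx_closure)
  have hpyth : ‖x - a‖ ^ 2 = ‖p‖ ^ 2 + ⟪x - a, da⟫ ^ 2 := by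
    rw [hp, norm_sub_inner_smul_sq_of_norm_eq_one hda]
    ring
  rw [hpyth] at hsep ⊢
  exact add_sq_div_le_sub_sqrt hε (pow_le_pow_left₀ (norm_nonneg p) hp'.le 2) hsc.le hsep

/-- Local inequality: with `(x − a)' = (x − a) − ⟨x − a, d_a⟩ d_a`, if `‖(x − a)'‖ < ε` and
`|⟨x − a, d_a⟩| < ε`, then `‖x − a‖²/(2ε) ≤ ε − √(ε² − ‖(x − a)'‖²)`. -/
theorem stmt_2 {n : ℕ} (hn : 2 ≤ n) (ε : ℝ) (hε : 0 < ε)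
    (Ω : Set (EuclideanSpace ℝ (Fin n))) (hΩ : IsOpen Ω)
    (a x : EuclideanSpace ℝ (Fin n)) (ha : a ∈ frontier Ω) (hx : x ∈ frontier Ω)
    (da : EuclideanSpace ℝ (Fin n)) (hda : ‖da‖ = 1)
    (ha1 : ball (a - ε • da) ε ⊆ Ω) (ha2 : ball (a + ε • da) ε ⊆ (closure Ω)ᶜ)
    (p : EuclideanSpace ℝ (Fin n)) (hp : p = (x - a) - ⟪x - a, da⟫ • da)
    (hp' : ‖p‖ < ε) (hsc : |(⟪x - a, da⟫)| < ε) :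
    ‖x - a‖ ^ 2 / (2 * ε) ≤ ε - Real.sqrt (ε ^ 2 - ‖p‖ ^ 2) :=
  stmt_2_general ε hε Ω hΩ a x hx da hda ha1 ha2 p hp hp' hsc
end

section
/- Let Ω ⊆ ℝⁿ be open with nonempty boundary. If Ω satisfies the ε-ball condition for some ε > 0, then the reach of ∂Ω is at least ε; that is, every point y ∈ ℝⁿ with d(y, ∂Ω) < ε has a unique nearest point in ∂Ω. -/
open Metric
open scoped RealInnerProductSpace

lemma aux_disjoint_balls {E : Type*} [NormedAddCommGroup E] [NormedSpace ℝ E]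
    {a b : E} {ra rb : ℝ} (hra : 0 < ra) (hrb : 0 < rb)
    (h : Disjoint (ball a ra) (ball b rb)) : ra + rb ≤ dist a b := by
  by_contra hlt
  push_neg at hlt
  have hsum : 0 < ra + rb := by linarith
  set t : ℝ := ra / (ra + rb) with ht
  have ht0 : 0 < t := div_pos hra hsum
  set q : E := a + t • (b - a) with hq
  have hqa : dist q a = t * dist a b := by
    rw [dist_eq_norm]
    simp only [hq, add_sub_cancel_left, norm_smul, Real.norm_eq_abs, abs_of_pos ht0,
      dist_eq_norm, norm_sub_rev a b]
  have h1t : 1 - t = rb / (ra + rb) := by rw [ht]; field_simp; ring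
  have hqb : dist q b = (1 - t) * dist a b := by
    have hqb' : q - b = (1 - t) • (a - b) := by simp only [hq]; module
    rw [dist_eq_norm, hqb', norm_smul, Real.norm_eq_abs,
      abs_of_pos (by rw [h1t]; positivity), dist_eq_norm]
  have h1 : q ∈ ball a ra := by
    rw [mem_ball, hqa, ht]
    calc ra / (ra + rb) * dist a b < ra / (ra + rb) * (ra + rb) :=
          mul_lt_mul_of_pos_left hlt ht0
      _ = ra := div_mul_cancel₀ _ hsum.ne'
  have h2 : q ∈ ball b rb := by
    rw [mem_ball, hqb, h1t]
    calc rb / (ra + rb) * dist a b < rb / (ra + rb) * (ra + rb) :=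
          mul_lt_mul_of_pos_left hlt (div_pos hrb hsum)
      _ = rb := div_mul_cancel₀ _ hsum.ne'
  exact h.ne_of_mem h1 h2 rfl

lemma aux_unique {E : Type*} [NormedAddCommGroup E] [InnerProductSpace ℝ E]
    {r ε : ℝ} (hr : 0 < r) (hrε : r < ε) {y z z' d : E} (hd : ‖d‖ = 1)
    (hdisj : Disjoint (ball y r) (ball (z + ε • d) ε))
    (hz'not : z' ∉ ball (z - ε • d) ε)
    (hyz : dist y z = r) (hyz' : dist y z' = r) : z' = z := by
  have hε : 0 < ε := hr.trans hrε
  have hεd : ‖ε • d‖ = ε := by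
    rw [norm_smul, Real.norm_eq_abs, abs_of_pos hε, hd, mul_one]
  -- Step A: dist y (z + ε • d) = r + ε
  have heq : dist y (z + ε • d) = r + ε := by
    refine le_antisymm ?_ (aux_disjoint_balls hr hε hdisj)
    calc dist y (z + ε • d) ≤ dist y z + dist z (z + ε • d) := dist_triangle _ _ _
      _ = r + ε := by rw [hyz, dist_eq_norm']; simp [hεd]
  have hA : ‖(z - y) + ε • d‖ = ‖z - y‖ + ‖ε • d‖ := by
    have h1 : (z - y) + ε • d = (z + ε • d) - y := by abel
    have n1 : ‖z - y‖ = r := by rw [← dist_eq_norm', hyz]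
    rw [h1, n1, hεd, ← dist_eq_norm', heq]
  have hray : SameRay ℝ (z - y) (ε • d) := sameRay_iff_norm_add.2 hA
  have hB : z - y = r • d := by
    have h2 := hray.norm_smul_eq
    rw [(by rw [← dist_eq_norm', hyz] : ‖z - y‖ = r), hεd] at h2
    -- h2 : r • (ε • d) = ε • (z - y)
    have h3 : ε • (z - y) = ε • (r • d) := by
      rw [← h2, smul_smul, smul_smul, mul_comm]
    exact smul_right_injective E hε.ne' h3
  have hy : y = z - r • d := by rw [← hB]; abel
  -- Step C
  have hyi : dist y (z - ε • d) = ε - r := by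
    rw [dist_eq_norm, hy]
    have h4 : z - r • d - (z - ε • d) = (ε - r) • d := by module
    rw [h4, norm_smul, Real.norm_eq_abs, abs_of_pos (by linarith), hd, mul_one]
  have hge : ε ≤ dist z' (z - ε • d) := by
    simpa [mem_ball, not_lt] using hz'not
  have heq' : dist z' (z - ε • d) = ε := by
    refine le_antisymm ?_ hge
    calc dist z' (z - ε • d) ≤ dist z' y + dist y (z - ε • d) := dist_triangle _ _ _
      _ = ε := by rw [dist_comm z' y, hyz', hyi]; ring
  have hA' : ‖(y - z') + ((z - ε • d) - y)‖ = ‖y - z'‖ + ‖(z - ε • d) - y‖ := by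
    have h1 : (y - z') + ((z - ε • d) - y) = (z - ε • d) - z' := by abel
    have n2 : ‖y - z'‖ = r := by rw [← dist_eq_norm, hyz']
    have n3 : ‖(z - ε • d) - y‖ = ε - r := by rw [← dist_eq_norm', hyi]
    rw [h1, n2, n3, ← dist_eq_norm', heq']; ring
  have hray' : SameRay ℝ (y - z') ((z - ε • d) - y) := sameRay_iff_norm_add.2 hA'
  have h5 := hray'.norm_smul_eq
  rw [(by rw [← dist_eq_norm, hyz'] : ‖y - z'‖ = r),
    (by rw [← dist_eq_norm', hyi] : ‖(z - ε • d) - y‖ = ε - r)] at h5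
  -- h5 : r • ((z - ε•d) - y) = (ε - r) • (y - z')
  have hv : (z - ε • d) - y = -((ε - r) • d) := by rw [hy]; module
  rw [hv] at h5
  have hkey : (ε - r) • (y - z') = (ε - r) • (-(r • d)) := by
    rw [← h5]; module
  have h6 : y - z' = -(r • d) :=
    smul_right_injective E (by linarith : (0:ℝ) < ε - r).ne' hkey
  have h7 : z' = y + r • d := by
    rw [← sub_sub_self y z', h6]; abel
  rw [h7, hy]; abel

/-- If an open set `Ω` with nonempty boundary satisfies the ε-ball condition, then the reach of
`∂Ω` is at least `ε`: every point at distance `< ε` from `∂Ω` has a unique nearest point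
in `∂Ω`. -/
theorem stmt_3 {n : ℕ} (hn : 2 ≤ n) (ε : ℝ) (hε : 0 < ε)
    (Ω : Set (EuclideanSpace ℝ (Fin n))) (hΩ : IsOpen Ω)
    (hfr : (frontier Ω).Nonempty)
    (hball : ∀ x ∈ frontier Ω, ∃ d : EuclideanSpace ℝ (Fin n), ‖d‖ = 1 ∧
      ball (x - ε • d) ε ⊆ Ω ∧ ball (x + ε • d) ε ⊆ (closure Ω)ᶜ) :
    ∀ y : EuclideanSpace ℝ (Fin n), Metric.infDist y (frontier Ω) < ε →
      ∃! z : EuclideanSpace ℝ (Fin n),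
        z ∈ frontier Ω ∧ dist y z = Metric.infDist y (frontier Ω) := by
  intro y hy
  obtain ⟨z, hz, hdz⟩ := isClosed_frontier.exists_infDist_eq_dist hfr y
  refine ⟨z, ⟨hz, hdz.symm⟩, ?_⟩
  rintro z' ⟨hz', hdz'⟩
  rcases eq_or_lt_of_le (Metric.infDist_nonneg :
      0 ≤ Metric.infDist y (frontier Ω)) with h0 | hrpos
  · have hyz : dist y z = 0 := by rw [← hdz, ← h0]
    have hyz' : dist y z' = 0 := by rw [hdz', ← h0]
    rw [dist_eq_zero] at hyz hyz'
    rw [← hyz', ← hyz]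
  -- main case
  have hfrnot : Disjoint (ball y (Metric.infDist y (frontier Ω))) (frontier Ω) := by
    refine Set.disjoint_left.2 fun w hw hwf => ?_
    have h1 := Metric.infDist_le_dist_of_mem (x := y) hwf
    rw [mem_ball, dist_comm] at hw
    linarith
  have hsub : ball y (Metric.infDist y (frontier Ω)) ⊆ Ω ∪ (closure Ω)ᶜ := by
    intro w hw
    have hnf : w ∉ frontier Ω := Set.disjoint_left.1 hfrnot hw
    rw [frontier_eq_closure_inter_closure, hΩ.isClosed_compl.closure_eq] at hnf
    simp only [Set.mem_inter_iff, not_and, Set.mem_compl_iff, not_not] at hnf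
    by_cases hc : w ∈ closure Ω
    · exact Or.inl (hnf hc)
    · exact Or.inr hc
  have hdisj_open : Disjoint Ω (closure Ω)ᶜ :=
    (disjoint_compl_right (a := closure Ω)).mono_left subset_closure
  have hconn : IsPreconnected (ball y (Metric.infDist y (frontier Ω))) :=
    (convex_ball y _).isPreconnected
  obtain ⟨d, hd, hin, hout⟩ := hball z hz
  have hz'Ω : z' ∉ Ω := fun h => (hΩ.frontier_eq ▸ hz').2 h
  have hz'cl : z' ∈ closure Ω := (hΩ.frontier_eq ▸ hz').1
  rcases hconn.subset_or_subset hΩ isClosed_closure.isOpen_compl hdisj_open hsub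
    with hcase | hcase
  · have hdisj : Disjoint (ball y (Metric.infDist y (frontier Ω))) (ball (z + ε • d) ε) :=
      Set.disjoint_left.2 fun w hw hw2 => (hout hw2) (subset_closure (hcase hw))
    have hz'not : z' ∉ ball (z - ε • d) ε := fun h => hz'Ω (hin h)
    exact aux_unique hrpos hy hd hdisj hz'not hdz.symm hdz'
  · have hd' : ‖(-d : EuclideanSpace ℝ (Fin n))‖ = 1 := by rw [norm_neg, hd]
    have hdisj : Disjoint (ball y (Metric.infDist y (frontier Ω)))
        (ball (z + ε • (-d)) ε) := by
      have he : z + ε • (-d) = z - ε • d := by module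
      rw [he]
      exact Set.disjoint_left.2 fun w hw hw2 => (hcase hw) (subset_closure (hin hw2))
    have hz'not : z' ∉ ball (z - ε • (-d)) ε := by
      have he : z - ε • (-d) = z + ε • d := by module
      rw [he]
      exact fun h => (hout h) hz'cl
    exact aux_unique hrpos hy hd' hdisj hz'not hdz.symm hdz'
end

section
/- Let Ω ⊆ ℝⁿ be open, satisfying the ε-ball condition, and let x ∈ ∂Ω. If y ∈ B_ε(x) ∩ Ω and z ∈ ∂Ω satisfies ‖z − y‖ = d(y, ∂Ω), then y = z − d(y, ∂Ω) · d_z. -/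
/-
The exterior ball `B_ε(z + ε d_z)` misses `Ω`, so every segment from `y ∈ Ω` into it crosses `∂Ω`;
letting its endpoint run to the sphere gives `d(y, ∂Ω) + ε ≤ ‖y - (z + ε d_z)‖`. Since also
`‖y - z‖ = d(y, ∂Ω)`, this is equality in the triangle inequality for `(y - z) - ε d_z`, which in a
strictly convex space forces `y - z` to point along `-d_z`.
-/

open Metric

theorem IsPreconnected.inter_frontier_nonempty {X : Type*} [TopologicalSpace X] {s t : Set X}
    (hs : IsPreconnected s) (hst : (s ∩ t).Nonempty) (hst' : (s \ t).Nonempty) :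
    (s ∩ frontier t).Nonempty := by
  by_contra! hfr
  have hcover : s ⊆ interior t ∪ (closure t)ᶜ := by
    intro p hp
    by_cases hpt : p ∈ closure t
    · by_contra hpi
      exact hfr.subset ⟨hp, hpt, fun h => hpi (Or.inl h)⟩
    · exact Or.inr hpt
  have hdisj : Disjoint (interior t) (closure t)ᶜ :=
    Set.disjoint_compl_right_iff_subset.mpr (interior_subset.trans subset_closure)
  obtain ⟨p, hps, hpt⟩ := hst
  obtain ⟨q, hqs, hqt⟩ := hst'
  rcases hs.subset_or_subset isOpen_interior isClosed_closure.isOpen_compl hdisj hcover with h | h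
  · exact hqt (interior_subset (h hqs))
  · exact h hps (subset_closure hpt)

section NormedSpace

variable {E : Type*} [NormedAddCommGroup E] [NormedSpace ℝ E]

theorem infDist_frontier_le_dist_of_mem_of_notMem {s : Set E} {y q : E} (hy : y ∈ s)
    (hq : q ∉ s) : infDist y (frontier s) ≤ dist y q := by
  obtain ⟨w, hw, hwf⟩ := (convex_segment y q).isPreconnected.inter_frontier_nonempty
    ⟨y, left_mem_segment ℝ y q, hy⟩ ⟨q, right_mem_segment ℝ y q, hq⟩
  calc infDist y (frontier s) ≤ dist y w := infDist_le_dist_of_mem hwf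
    _ ≤ dist y q := by linarith [dist_add_dist_of_mem_segment hw, dist_nonneg (x := w) (y := q)]

theorem infDist_frontier_add_le_dist_of_ball_subset_compl {s : Set E} {y c : E} {r : ℝ}
    (hr : 0 < r) (hy : y ∈ s) (hball : ball c r ⊆ sᶜ) :
    infDist y (frontier s) + r ≤ dist y c := by
  set L := dist y c
  have hrL : r ≤ L := not_lt.mp fun h => hball (mem_ball.mpr h) hy
  have hL : 0 < L := hr.trans_le hrL
  have hle : ∀ q ∈ closedBall c r, infDist y (frontier s) ≤ dist y q := by
    rw [← closure_ball c hr.ne']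
    exact closure_minimal
      (fun q hq => infDist_frontier_le_dist_of_mem_of_notMem hy (hball hq))
      (isClosed_le continuous_const (continuous_const.dist continuous_id))
  have hcy : dist c y = L := dist_comm c y
  set q := AffineMap.lineMap c y (r / L)
  have hqc : dist q c = r := by
    rw [dist_lineMap_left, Real.norm_of_nonneg (by positivity), hcy]
    field_simp
  have hyq : dist y q = L - r := by
    rw [dist_comm, dist_lineMap_right, hcy,
      Real.norm_of_nonneg (by rw [sub_nonneg, div_le_one hL]; exact hrL)]
    field_simp
  linarith [hle q (mem_closedBall.mpr hqc.le)]

theorem eq_neg_norm_smul_of_norm_add_le_norm_sub_smul [StrictConvexSpace ℝ E] {v u : E}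
    (hu : ‖u‖ = 1) {r : ℝ} (hr : 0 < r) (h : ‖v‖ + r ≤ ‖v - r • u‖) : v = -‖v‖ • u := by
  have hru : ‖-(r • u)‖ = r := by rw [norm_neg, norm_smul, hu, Real.norm_of_nonneg hr.le, mul_one]
  have hray : SameRay ℝ v (-(r • u)) := by
    rw [sameRay_iff_norm_add, hru, ← sub_eq_add_neg]
    exact le_antisymm ((norm_sub_le v (r • u)).trans_eq (by rw [← norm_neg (r • u), hru])) h
  have key := hray.norm_smul_eq
  rw [hru] at key
  apply smul_right_injective E hr.ne'
  simp only [← key]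
  module

end NormedSpace

theorem stmt_4_general {n : ℕ} (ε : ℝ) (hε : 0 < ε)
    (Ω : Set (EuclideanSpace ℝ (Fin n)))
    (x : EuclideanSpace ℝ (Fin n))
    (y : EuclideanSpace ℝ (Fin n)) (hy : y ∈ ball x ε ∩ Ω)
    (z : EuclideanSpace ℝ (Fin n))
    (hzy : dist y z = Metric.infDist y (frontier Ω))
    (dz : EuclideanSpace ℝ (Fin n)) (hdz : ‖dz‖ = 1)
    (hz2 : ball (z + ε • dz) ε ⊆ (closure Ω)ᶜ) :
    y = z - Metric.infDist y (frontier Ω) • dz := by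
  have hyz : ‖y - z‖ = infDist y (frontier Ω) := by rw [← dist_eq_norm, hzy]
  have hfar := infDist_frontier_add_le_dist_of_ball_subset_compl hε hy.2
    (hz2.trans (Set.compl_subset_compl.mpr subset_closure))
  rw [← hyz, dist_eq_norm, sub_add_eq_sub_sub] at hfar
  have hdir := eq_neg_norm_smul_of_norm_add_le_norm_sub_smul hdz hε hfar
  rw [hyz] at hdir
  linear_combination (norm := module) hdir

/-- If `Ω` satisfies the ε-ball condition, `x ∈ ∂Ω`, `y ∈ B_ε(x) ∩ Ω`, and `z ∈ ∂Ω` realizes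
the distance from `y` to `∂Ω`, then `y = z − d(y, ∂Ω) · d_z`. -/
theorem stmt_4 {n : ℕ} (hn : 2 ≤ n) (ε : ℝ) (hε : 0 < ε)
    (Ω : Set (EuclideanSpace ℝ (Fin n))) (hΩ : IsOpen Ω)
    (hball : ∀ w ∈ frontier Ω, ∃ d : EuclideanSpace ℝ (Fin n), ‖d‖ = 1 ∧
      ball (w - ε • d) ε ⊆ Ω ∧ ball (w + ε • d) ε ⊆ (closure Ω)ᶜ)
    (x : EuclideanSpace ℝ (Fin n)) (hx : x ∈ frontier Ω)
    (y : EuclideanSpace ℝ (Fin n)) (hy : y ∈ ball x ε ∩ Ω)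
    (z : EuclideanSpace ℝ (Fin n)) (hz : z ∈ frontier Ω)
    (hzy : dist y z = Metric.infDist y (frontier Ω))
    (dz : EuclideanSpace ℝ (Fin n)) (hdz : ‖dz‖ = 1)
    (hz1 : ball (z - ε • dz) ε ⊆ Ω) (hz2 : ball (z + ε • dz) ε ⊆ (closure Ω)ᶜ) :
    y = z - Metric.infDist y (frontier Ω) • dz :=
  stmt_4_general ε hε Ω x y hy z hzy dz hdz hz2
end

section
/- Let A ⊆ ℝⁿ be nonempty and closed, x ∈ A, and v ∈ ℝⁿ. If the set T = {t > 0 : x + t v ∈ Unp(A) and the unique nearest point of x + t v in A is x} is nonempty and bounded above with supremum τ, then x + τ v does not belong to the interior of Unp(A). -/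
open Metric
open scoped RealInnerProductSpace

/-- `Unp A` is the set of points having a unique nearest point in `A`. -/
def Unp {n : ℕ} (A : Set (EuclideanSpace ℝ (Fin n))) : Set (EuclideanSpace ℝ (Fin n)) :=
  {x | ∃! a, a ∈ A ∧ dist x a = Metric.infDist x A}

open Set Filter
open scoped Topology

/-!
At a point `z ∉ A` with a unique nearest point `a`, nearest points vary continuously, so the
distance `D = infDist · A` grows at unit rate in the direction `z - a`. A Dini-derivative argument
then shows that if `closedBall y r ⊆ Unp A` and `y ∉ A`, the maximum of `D` on `closedBall y t`
is at least `D y + t` for `t ≤ r`. For `y = x + τ • v` continuity gives `D y = dist y x`, so a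
maximiser `z` at radius `r` has `D z = dist z x = dist z y + dist y x`. By strict convexity
`z = x + t • v` with `t > τ`, and `x` is the nearest point of `z`, so `t ∈ T`: a contradiction.
-/

section ProperSpace

variable {X : Type*} [MetricSpace X] [ProperSpace X] {A : Set X} {z a : X}

theorem eventually_forall_nearest_dist_lt (hA : IsClosed A)
    (hz : ∃! a, a ∈ A ∧ dist z a = infDist z A) (ha : a ∈ A) (hza : dist z a = infDist z A)
    {ε : ℝ} (hε : 0 < ε) :
    ∀ᶠ z' in 𝓝 z, ∀ b ∈ A, dist z' b = infDist z' A → dist b a < ε := by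
  set K := (A ∩ {b | ε ≤ dist b a}) ∩ closedBall z (infDist z A + 1)
  have hK : IsCompact K := (isCompact_closedBall _ _).inter_left
    (hA.inter (isClosed_le continuous_const (continuous_id.dist continuous_const)))
  -- Compactness turns `infDist z A < dist z b` on `K` into a uniform gap `γ`.
  obtain ⟨γ, hγ, hγK⟩ := hK.exists_forall_le' (a := infDist z A)
    (continuous_const.dist continuous_id).continuousOn fun b ⟨⟨hbA, hba⟩, _⟩ ↦ by
      refine (infDist_le_dist_of_mem hbA).lt_of_ne fun hzb ↦ ?_
      have : b = a := hz.unique ⟨hbA, hzb.symm⟩ ⟨ha, hza⟩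
      exact hε.not_ge (by simpa [this] using hba)
  rw [Metric.eventually_nhds_iff]
  refine ⟨min ((γ - infDist z A) / 2) (1 / 2), by positivity, fun z' hz' b hbA hz'b ↦ ?_⟩
  have hη := lt_min_iff.mp hz'
  have hzb : dist z b < min γ (infDist z A + 1) := calc
    dist z b ≤ dist z z' + dist z' b := dist_triangle _ _ _
    _ ≤ dist z' z + (infDist z A + dist z' z) := by
      rw [dist_comm z z', hz'b]; gcongr; exact infDist_le_infDist_add_dist
    _ < min γ (infDist z A + 1) := by apply lt_min <;> linarith
  by_contra! hba
  have hbK : b ∈ K := ⟨⟨hbA, hba⟩, mem_closedBall'.mpr (hzb.trans_le (min_le_right _ _)).le⟩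
  exact (hγK b hbK).not_gt (hzb.trans_le (min_le_left _ _))

end ProperSpace

section BallSup

variable {F : Type*} [NormedAddCommGroup F] [NormedSpace ℝ F] {f : F → ℝ} {y : F}

/-- `ballSup f y t` is the supremum of `f` on `closedBall y |t|`; parametrising the ball by the
unit ball makes it evidently `1`-Lipschitz in `t`. -/
noncomputable def ballSup (f : F → ℝ) (y : F) (t : ℝ) : ℝ :=
  ⨆ w : closedBall (0 : F) 1, f (y + t • (w : F))

theorem LipschitzWith.le_add_dist {X : Type*} [PseudoMetricSpace X] {f : X → ℝ}
    (hf : LipschitzWith 1 f) (x x' : X) : f x ≤ f x' + dist x x' := by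
  simpa using hf.le_add_mul x x'

theorem bddAbove_range_add_smul (hf : LipschitzWith 1 f) (y : F) (t : ℝ) :
    BddAbove (range fun w : closedBall (0 : F) 1 ↦ f (y + t • (w : F))) := by
  refine ⟨f y + |t|, ?_⟩
  rintro _ ⟨⟨w, hw⟩, rfl⟩
  calc f (y + t • w) ≤ f y + ‖t • w‖ := by simpa using hf.le_add_dist (y + t • w) y
    _ ≤ f y + |t| := by
      rw [norm_smul, Real.norm_eq_abs]
      gcongr
      exact mul_le_of_le_one_right (abs_nonneg t) (mem_closedBall_zero_iff.mp hw)

theorem le_ballSup (hf : LipschitzWith 1 f) (t : ℝ) {w : F} (hw : ‖w‖ ≤ 1) :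
    f (y + t • w) ≤ ballSup f y t :=
  le_ciSup (f := fun w : closedBall (0 : F) 1 ↦ f (y + t • (w : F)))
    (bddAbove_range_add_smul hf y t) ⟨w, mem_closedBall_zero_iff.mpr hw⟩

theorem le_ballSup_of_dist_le (hf : LipschitzWith 1 f) {t : ℝ} (ht : 0 < t) {z : F}
    (hz : dist z y ≤ t) : f z ≤ ballSup f y t := by
  have hw : ‖t⁻¹ • (z - y)‖ ≤ 1 := by
    rw [norm_smul, norm_inv, Real.norm_of_nonneg ht.le, ← dist_eq_norm]
    exact inv_mul_le_one_of_le₀ hz ht.le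
  simpa [smul_smul, ht.ne'] using le_ballSup (y := y) hf t hw

theorem lipschitzWith_ballSup (hf : LipschitzWith 1 f) (y : F) :
    LipschitzWith 1 (ballSup f y) := by
  refine LipschitzWith.of_le_add fun t s ↦ ciSup_le fun ⟨w, hw⟩ ↦ ?_
  have hw : ‖w‖ ≤ 1 := mem_closedBall_zero_iff.mp hw
  calc f (y + t • w) ≤ f (y + s • w) + ‖(t - s) • w‖ := by
        simpa [dist_eq_norm, sub_smul] using hf.le_add_dist (y + t • w) (y + s • w)
    _ ≤ ballSup f y s + dist t s := by
        rw [norm_smul, Real.norm_eq_abs, ← Real.dist_eq]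
        gcongr
        · exact le_ballSup hf s hw
        · exact mul_le_of_le_one_right dist_nonneg hw

theorem dist_add_smul_le {t : ℝ} (ht : 0 ≤ t) {w : F} (hw : ‖w‖ ≤ 1) :
    dist (y + t • w) y ≤ t := by
  rw [dist_eq_norm, add_sub_cancel_left, norm_smul, Real.norm_of_nonneg ht]
  exact mul_le_of_le_one_right ht hw

theorem exists_eq_ballSup [ProperSpace F] (hf : LipschitzWith 1 f) (y : F) (t : ℝ) :
    ∃ w : F, ‖w‖ ≤ 1 ∧ f (y + t • w) = ballSup f y t := by
  obtain ⟨w, hw, hmax⟩ := (isCompact_closedBall (0 : F) 1).exists_isMaxOn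
    ⟨0, mem_closedBall_self zero_le_one⟩
    (hf.continuous.comp (by fun_prop : Continuous fun w : F ↦ y + t • w)).continuousOn
  have hw := mem_closedBall_zero_iff.mp hw
  exact ⟨w, hw, le_antisymm (le_ballSup hf t hw) (ciSup_le fun w' ↦ hmax w'.2)⟩

end BallSup

section InnerProductSpace

variable {E : Type*} [NormedAddCommGroup E] [InnerProductSpace ℝ E] {A : Set E}

theorem inner_inv_norm_smul_self (x : E) : ⟪x, ‖x‖⁻¹ • x⟫ = ‖x‖ := by
  rw [real_inner_smul_right, real_inner_self_eq_norm_sq, sq, ← mul_assoc, inv_mul_mul_self]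

theorem norm_inv_norm_smul_le_one (x : E) : ‖‖x‖⁻¹ • x‖ ≤ 1 := by
  rw [norm_smul, norm_inv, norm_norm]
  exact inv_mul_le_one

theorem infDist_add_mul_inner_le_dist {b : E} (hb : b ∈ A) (z u : E) (h : ℝ) :
    infDist z A + h * ⟪u, ‖z - b‖⁻¹ • (z - b)⟫ ≤ dist (z + h • u) b := by
  set w := ‖z - b‖⁻¹ • (z - b)
  calc infDist z A + h * ⟪u, w⟫ ≤ ‖z - b‖ + h * ⟪u, w⟫ := by
        gcongr; rw [← dist_eq_norm]; exact infDist_le_dist_of_mem hb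
    _ = ⟪z + h • u - b, w⟫ := by
        rw [add_sub_right_comm, inner_add_left, inner_inv_norm_smul_self, real_inner_smul_left]
    _ ≤ ‖z + h • u - b‖ * ‖w‖ := real_inner_le_norm _ _
    _ ≤ dist (z + h • u) b := by
        rw [dist_eq_norm]
        exact mul_le_of_le_one_right (norm_nonneg _) (norm_inv_norm_smul_le_one _)

variable [ProperSpace E] {z a : E}

theorem eventually_infDist_add_smul_ge (hA : IsClosed A)
    (hz : ∃! a, a ∈ A ∧ dist z a = infDist z A) (ha : a ∈ A) (hza : dist z a = infDist z A)
    (hza_ne : z ≠ a) {ε : ℝ} (hε : 0 < ε) :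
    ∀ᶠ h in 𝓝[>] 0,
      infDist z A + (1 - ε) * h ≤ infDist (z + h • (‖z - a‖⁻¹ • (z - a))) A := by
  have hne : ‖z - a‖ ≠ 0 := norm_ne_zero_iff.mpr (sub_ne_zero.mpr hza_ne)
  have hu : ⟪‖z - a‖⁻¹ • (z - a), ‖z - a‖⁻¹ • (z - a)⟫ = 1 := by
    rw [real_inner_self_eq_norm_sq, norm_smul, norm_inv, norm_norm, inv_mul_cancel₀ hne, one_pow]
  set u := ‖z - a‖⁻¹ • (z - a)
  have hcont : ContinuousAt (fun b ↦ ⟪u, ‖z - b‖⁻¹ • (z - b)⟫) a := by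
    fun_prop (disch := exact hne)
  obtain ⟨δ, hδ, hδa⟩ := Metric.continuousAt_iff.mp hcont ε hε
  have hlim : Tendsto (fun h : ℝ ↦ z + h • u) (𝓝[>] 0) (𝓝 z) := by
    refine ((continuous_const.add (continuous_id.smul continuous_const)).tendsto' 0 z ?_).mono_left
      nhdsWithin_le_nhds
    simp
  filter_upwards [hlim.eventually (eventually_forall_nearest_dist_lt hA hz ha hza hδ),
    self_mem_nhdsWithin] with h hnear (hh : 0 < h)
  obtain ⟨b, hbA, hb⟩ := hA.exists_infDist_eq_dist ⟨a, ha⟩ (z + h • u)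
  have hinner : 1 - ε < ⟪u, ‖z - b‖⁻¹ • (z - b)⟫ := by
    have := hδa (hnear b hbA hb.symm)
    rw [hu, Real.dist_eq, abs_lt] at this
    linarith [this.1]
  calc infDist z A + (1 - ε) * h ≤ infDist z A + h * ⟪u, ‖z - b‖⁻¹ • (z - b)⟫ := by
        rw [mul_comm]; gcongr
    _ ≤ infDist (z + h • u) A := hb ▸ infDist_add_mul_inner_le_dist hbA z u h

theorem eventually_ballSup_infDist_ge (hA : IsClosed A) {y : E} (hy : 0 < infDist y A) {t : ℝ}
    (ht : 0 ≤ t) (hU : ∀ z ∈ closedBall y t, ∃! a, a ∈ A ∧ dist z a = infDist z A)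
    {ε : ℝ} (hε : 0 < ε) :
    ∀ᶠ s in 𝓝[>] t,
      ballSup (infDist · A) y t + (1 - ε) * (s - t) ≤ ballSup (infDist · A) y s := by
  have hD := lipschitz_infDist_pt A
  obtain ⟨w, hw, hz⟩ := exists_eq_ballSup hD y t
  set z := y + t • w
  have hzy : dist z y ≤ t := dist_add_smul_le ht hw
  have hzU := hU z (mem_closedBall.mpr hzy)
  obtain ⟨a, ha, hza⟩ := hzU.exists
  have hyz : infDist y A ≤ infDist z A :=
    hz ▸ by simpa using le_ballSup (y := y) hD t (w := 0) (by simp)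
  have hza_ne : z ≠ a := by
    rintro rfl
    rw [dist_self] at hza
    linarith
  have hshift : Tendsto (· - t) (𝓝[>] t) (𝓝[>] 0) := by
    have h := map_subRight_nhdsGT (c := t) (a := t)
    rw [sub_self] at h
    exact h.le
  filter_upwards [hshift.eventually (eventually_infDist_add_smul_ge hA hzU ha hza hza_ne hε),
    self_mem_nhdsWithin] with s hs (hts : t < s)
  rw [← hz]
  refine hs.trans (le_ballSup_of_dist_le hD (ht.trans_lt hts) ?_)
  calc dist (z + (s - t) • ‖z - a‖⁻¹ • (z - a)) y ≤ (s - t) + t := by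
        refine (dist_triangle _ z _).trans (add_le_add ?_ hzy)
        simpa using dist_add_smul_le (y := z) (sub_nonneg.mpr hts.le)
          (norm_inv_norm_smul_le_one (z - a))
    _ = s := by ring

theorem exists_mem_closedBall_infDist_ge (hA : IsClosed A) {y : E} (hy : 0 < infDist y A) {r : ℝ}
    (hr : 0 ≤ r) (hU : ∀ z ∈ closedBall y r, ∃! a, a ∈ A ∧ dist z a = infDist z A) :
    ∃ z ∈ closedBall y r, infDist y A + r ≤ infDist z A := by
  have hD := lipschitz_infDist_pt A
  set M := ballSup (infDist · A) y
  -- `t ↦ infDist y A + t - M t` is continuous with right lower Dini derivative `≤ 0`.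
  have hgrowth : ∀ t ∈ Icc 0 r, infDist y A + t - M t ≤ 0 := by
    refine image_le_of_liminf_slope_right_le_deriv_boundary (f := fun t ↦ infDist y A + t - M t)
      (B := fun _ ↦ 0) (B' := fun _ ↦ 0)
      ((continuous_const.add continuous_id).sub
        (lipschitzWith_ballSup hD y).continuous).continuousOn
      ?_ continuousOn_const (fun _ _ ↦ hasDerivWithinAt_const _ _ _) fun t ht q hq ↦ ?_
    · simpa using le_ballSup (y := y) hD 0 (w := 0) (by simp)
    refine Eventually.frequently ?_
    filter_upwards [eventually_ballSup_infDist_ge hA hy ht.1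
      (fun z hz ↦ hU z (closedBall_subset_closedBall ht.2.le hz)) (half_pos hq),
      self_mem_nhdsWithin] with s hs (hts : t < s)
    rw [slope_def_field, div_lt_iff₀ (sub_pos.mpr hts)]
    nlinarith
  obtain ⟨w, hw, hwM⟩ := exists_eq_ballSup hD y r
  refine ⟨y + r • w, mem_closedBall.mpr (dist_add_smul_le hr hw), ?_⟩
  linarith [hgrowth r ⟨hr, le_rfl⟩]

end InnerProductSpace

theorem exists_lt_eq_add_smul_of_dist_eq {E : Type*} [NormedAddCommGroup E] [NormedSpace ℝ E]
    [StrictConvexSpace ℝ E] {x v z : E} {τ : ℝ} (hτ : 0 < τ) (hv : v ≠ 0)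
    (hz : dist z x = dist z (x + τ • v) + dist (x + τ • v) x) (hzy : z ≠ x + τ • v) :
    ∃ t, τ < t ∧ z = x + t • v := by
  have hray : SameRay ℝ (τ • v) (z - (x + τ • v)) := by
    rw [sameRay_iff_norm_add, show τ • v + (z - (x + τ • v)) = z - x by abel]
    simpa [dist_eq_norm, add_comm] using hz
  obtain ⟨c, hc, hcz⟩ := hray.exists_nonneg_left (smul_ne_zero hτ.ne' hv)
  have hc0 : c ≠ 0 := by
    rintro rfl
    exact hzy (sub_eq_zero.mp (by simpa using hcz.symm))
  refine ⟨τ + c * τ, lt_add_of_pos_right τ (mul_pos (hc.lt_of_ne' hc0) hτ), ?_⟩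
  rw [add_smul, mul_smul, hcz]
  abel

theorem stmt_7_general {n : ℕ} (A : Set (EuclideanSpace ℝ (Fin n)))
    (hAc : IsClosed A)
    (x : EuclideanSpace ℝ (Fin n)) (hx : x ∈ A) (v : EuclideanSpace ℝ (Fin n))
    (T : Set ℝ)
    (hT : T = {t : ℝ | 0 < t ∧ x + t • v ∈ Unp A ∧
      dist (x + t • v) x = Metric.infDist (x + t • v) A})
    (hTne : T.Nonempty) (hTbdd : BddAbove T)
    (τ : ℝ) (hτ : τ = sSup T) :
    x + τ • v ∉ interior (Unp A) := by
  intro hy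
  obtain ⟨t₀, ht₀⟩ := hTne
  have hτpos : 0 < τ := (hT ▸ ht₀).1.trans_le (hτ ▸ le_csSup hTbdd ht₀)
  have hv : v ≠ 0 := by
    rintro rfl
    obtain ⟨c, hc⟩ := hTbdd
    have hmem : max c 0 + 1 ∈ T := by
      rw [hT] at ht₀ ⊢
      simp only [smul_zero, add_zero] at ht₀ ⊢
      exact ⟨by positivity, ht₀.2⟩
    linarith [hc hmem, le_max_left c 0]
  have hd : infDist (x + τ • v) A = dist (x + τ • v) x := by
    have hcl : closure T ⊆ {t | dist (x + t • v) x = infDist (x + t • v) A} :=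
      closure_minimal (fun t ht ↦ (hT ▸ ht).2.2) (isClosed_eq (by fun_prop) (by fun_prop))
    exact (hcl (hτ ▸ csSup_mem_closure ⟨t₀, ht₀⟩ hTbdd)).symm
  have hdpos : 0 < dist (x + τ • v) x := by simp [hτpos.ne', hv]
  obtain ⟨r, hr, hball⟩ := nhds_basis_closedBall.mem_iff.mp (mem_interior_iff_mem_nhds.mp hy)
  obtain ⟨z, hz, hDz⟩ := exists_mem_closedBall_infDist_ge hAc (hd ▸ hdpos) hr.le
    fun z hz ↦ hball hz
  have hzx : infDist z A ≤ dist z x := infDist_le_dist_of_mem hx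
  have hzy : dist z (x + τ • v) ≤ r := mem_closedBall.mp hz
  have htri := dist_triangle z (x + τ • v) x
  have hzy_ne : z ≠ x + τ • v := by
    rintro rfl
    linarith
  obtain ⟨t, hτt, rfl⟩ :=
    exists_lt_eq_add_smul_of_dist_eq (x := x) hτpos hv (by linarith) hzy_ne
  have htT : t ∈ T := hT ▸ ⟨hτpos.trans hτt, hball hz, by linarith⟩
  exact (le_csSup hTbdd htT).not_gt (hτ ▸ hτt)

/-- Federer: if `T = {t > 0 : x + tv ∈ Unp(A), p_A(x + tv) = x}` is nonempty and bounded
above with supremum `τ`, then `x + τv` is not in the interior of `Unp(A)`. -/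
theorem stmt_7 {n : ℕ} (A : Set (EuclideanSpace ℝ (Fin n)))
    (hA : A.Nonempty) (hAc : IsClosed A)
    (x : EuclideanSpace ℝ (Fin n)) (hx : x ∈ A) (v : EuclideanSpace ℝ (Fin n))
    (T : Set ℝ)
    (hT : T = {t : ℝ | 0 < t ∧ x + t • v ∈ Unp A ∧
      dist (x + t • v) x = Metric.infDist (x + t • v) A})
    (hTne : T.Nonempty) (hTbdd : BddAbove T)
    (τ : ℝ) (hτ : τ = sSup T) :
    x + τ • v ∉ interior (Unp A) :=
  stmt_7_general A hAc x hx v T hT hTne hTbdd τ hτ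
end

section
/- Let Ω ⊆ ℝⁿ be open and nonempty with ∂Ω nonempty. For any x ∈ ∂Ω, Reach(∂Ω, x) = min(Reach(closure(Ω), x), Reach(ℝⁿ \ Ω, x)). -/
open Metric
open scoped RealInnerProductSpace ENNReal

/-- `Reach(A, a) = sup {r : B_r(a) ⊆ Unp(A)}`. -/
noncomputable def reachAt {n : ℕ} (A : Set (EuclideanSpace ℝ (Fin n)))
    (a : EuclideanSpace ℝ (Fin n)) : ℝ≥0∞ :=
  sSup {r : ℝ≥0∞ | EMetric.ball a r ⊆ Unp A}

lemma mem_unp_self {n : ℕ} {A : Set (EuclideanSpace ℝ (Fin n))} {y : EuclideanSpace ℝ (Fin n)}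
    (hy : y ∈ A) : y ∈ Unp A := by
  refine ⟨y, ⟨hy, by rw [Metric.infDist_zero_of_mem hy, dist_self]⟩, ?_⟩
  rintro a ⟨haA, had⟩
  rw [Metric.infDist_zero_of_mem hy] at had
  exact (dist_eq_zero.mp had).symm

/-- A nearest point of `C` from a point outside `C` lies on the frontier of `C`. -/
lemma nearest_mem_frontier {n : ℕ} {C : Set (EuclideanSpace ℝ (Fin n))}
    {y a : EuclideanSpace ℝ (Fin n)} (hy : y ∉ C) (ha : a ∈ C)
    (hd : dist y a = Metric.infDist y C) : a ∈ frontier C := by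
  rw [frontier, Set.mem_diff]
  refine ⟨subset_closure ha, fun hint => ?_⟩
  obtain ⟨ε, εpos, hball⟩ := Metric.mem_nhds_iff.mp (mem_interior_iff_mem_nhds.mp hint)
  have hya : y ≠ a := fun h => hy (h ▸ ha)
  have hr : 0 < dist y a := dist_pos.mpr hya
  set r := dist y a with hrdef
  set t : ℝ := min (ε / (2 * r)) (1 / 2) with htdef
  have ht0 : 0 < t := lt_min (by positivity) (by norm_num)
  have ht1 : t ≤ 1 / 2 := min_le_right _ _
  set a' : EuclideanSpace ℝ (Fin n) := a + t • (y - a) with ha'def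
  have h1 : dist a' a = t * r := by
    rw [dist_eq_norm]
    have : a' - a = t • (y - a) := by rw [ha'def]; abel
    rw [this, norm_smul, Real.norm_eq_abs, abs_of_pos ht0, hrdef, dist_eq_norm]
  have ha'C : a' ∈ C := by
    apply hball
    rw [Metric.mem_ball, h1]
    have h2 : t * r ≤ ε / 2 := by
      have h3 : t ≤ ε / (2 * r) := min_le_left _ _
      have h4 : t * r ≤ ε / (2 * r) * r := mul_le_mul_of_nonneg_right h3 hr.le
      have h5 : ε / (2 * r) * r = ε / 2 := by field_simp
      linarith
    linarith [half_lt_self εpos]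
  have h2 : dist y a' = (1 - t) * r := by
    rw [dist_eq_norm]
    have : y - a' = (1 - t) • (y - a) := by
      rw [ha'def, sub_smul, one_smul]; abel
    rw [this, norm_smul, Real.norm_eq_abs, abs_of_pos (by linarith : (0:ℝ) < 1 - t), hrdef,
      dist_eq_norm]
  have hle : Metric.infDist y C ≤ dist y a' := Metric.infDist_le_dist_of_mem ha'C
  rw [h2, ← hd] at hle
  nlinarith

lemma infDist_compl_eq {n : ℕ} {Ω : Set (EuclideanSpace ℝ (Fin n))} (hΩ : IsOpen Ω)
    (hfr : (frontier Ω).Nonempty) {y : EuclideanSpace ℝ (Fin n)} (hy : y ∈ Ω) :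
    Metric.infDist y Ωᶜ = Metric.infDist y (frontier Ω) := by
  have hΩne : Ω ≠ Set.univ := by
    intro h; rw [h, frontier_univ] at hfr; exact hfr.ne_empty rfl
  refine le_antisymm ?_ ?_
  · refine Metric.infDist_le_infDist_of_subset ?_ hfr
    rw [hΩ.frontier_eq]; exact Set.diff_subset_compl _ _
  · obtain ⟨c, hc, hcd⟩ := exists_mem_frontier_infDist_compl_eq_dist hy hΩne
    rw [hcd]
    exact Metric.infDist_le_dist_of_mem hc

lemma infDist_closure_eq {n : ℕ} {Ω : Set (EuclideanSpace ℝ (Fin n))}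
    (hne : Ω.Nonempty) (hfr : (frontier Ω).Nonempty) {y : EuclideanSpace ℝ (Fin n)}
    (hy : y ∉ closure Ω) : Metric.infDist y (closure Ω) = Metric.infDist y (frontier Ω) := by
  have hsne : (closure Ω)ᶜ ≠ Set.univ := by
    intro h
    exact (hne.mono subset_closure).ne_empty (Set.compl_univ_iff.mp h)
  refine le_antisymm ?_ ?_
  · exact Metric.infDist_le_infDist_of_subset frontier_subset_closure hfr
  · obtain ⟨c, hc, hcd⟩ := exists_mem_frontier_infDist_compl_eq_dist (s := (closure Ω)ᶜ) hy hsne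
    rw [compl_compl] at hcd
    rw [frontier_compl] at hc
    rw [hcd]
    exact Metric.infDist_le_dist_of_mem (frontier_closure_subset hc)

lemma unp_frontier_eq {n : ℕ} {Ω : Set (EuclideanSpace ℝ (Fin n))} (hΩ : IsOpen Ω)
    (hne : Ω.Nonempty) (hfr : (frontier Ω).Nonempty) :
    Unp (frontier Ω) = Unp (closure Ω) ∩ Unp Ωᶜ := by
  have hfrc : frontier Ω ⊆ Ωᶜ := by
    rw [hΩ.frontier_eq]; exact Set.diff_subset_compl _ _
  ext y
  by_cases hy : y ∈ Ω
  · -- y ∈ Ω : trivially in Unp (closure Ω); compare Ωᶜ and frontier Ω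
    have hid : Metric.infDist y Ωᶜ = Metric.infDist y (frontier Ω) := infDist_compl_eq hΩ hfr hy
    have key : ∀ a, (a ∈ frontier Ω ∧ dist y a = Metric.infDist y (frontier Ω)) ↔
        (a ∈ Ωᶜ ∧ dist y a = Metric.infDist y Ωᶜ) := by
      intro a
      constructor
      · rintro ⟨haf, had⟩
        exact ⟨hfrc haf, by rw [had, hid]⟩
      · rintro ⟨hac, had⟩
        have haf : a ∈ frontier Ωᶜ := nearest_mem_frontier (by simpa using hy) hac had
        rw [frontier_compl] at haf
        exact ⟨haf, by rw [had, hid]⟩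
    simp only [Unp, Set.mem_setOf_eq, Set.mem_inter_iff]
    constructor
    · intro h
      exact ⟨mem_unp_self (subset_closure hy), existsUnique_congr key |>.mp h⟩
    · rintro ⟨-, h⟩
      exact (existsUnique_congr key).mpr h
  · by_cases hy2 : y ∈ closure Ω
    · -- y ∈ frontier Ω
      have hyf : y ∈ frontier Ω := ⟨hy2, by rw [hΩ.interior_eq]; exact hy⟩
      have hyc : y ∈ Ωᶜ := hy
      constructor
      · intro _; exact ⟨mem_unp_self hy2, mem_unp_self hyc⟩
      · intro _; exact mem_unp_self hyf
    · -- y ∉ closure Ω : trivially in Unp Ωᶜ; compare closure Ω and frontier Ω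
      have hid : Metric.infDist y (closure Ω) = Metric.infDist y (frontier Ω) :=
        infDist_closure_eq hne hfr hy2
      have key : ∀ a, (a ∈ frontier Ω ∧ dist y a = Metric.infDist y (frontier Ω)) ↔
          (a ∈ closure Ω ∧ dist y a = Metric.infDist y (closure Ω)) := by
        intro a
        constructor
        · rintro ⟨haf, had⟩
          exact ⟨frontier_subset_closure haf, by rw [had, hid]⟩
        · rintro ⟨hac, had⟩
          have haf : a ∈ frontier (closure Ω) := nearest_mem_frontier hy2 hac had
          exact ⟨frontier_closure_subset haf, by rw [had, hid]⟩
      simp only [Unp, Set.mem_setOf_eq, Set.mem_inter_iff]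
      constructor
      · intro h
        exact ⟨(existsUnique_congr key).mp h, mem_unp_self (show y ∈ Ωᶜ from hy)⟩
      · rintro ⟨h, -⟩
        exact (existsUnique_congr key).mpr h

lemma sSup_inter_lower {S T : Set ℝ≥0∞} (hS : IsLowerSet S) (hT : IsLowerSet T) :
    sSup (S ∩ T) = min (sSup S) (sSup T) := by
  refine le_antisymm (le_min (sSup_le_sSup Set.inter_subset_left)
    (sSup_le_sSup Set.inter_subset_right)) ?_
  refine le_of_forall_lt_imp_le_of_dense fun c hc => ?_
  obtain ⟨s, hs, hcs⟩ := lt_sSup_iff.mp ((lt_min_iff.mp hc).1)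
  obtain ⟨t, ht, hct⟩ := lt_sSup_iff.mp ((lt_min_iff.mp hc).2)
  exact le_sSup ⟨hS hcs.le hs, hT hct.le ht⟩

/-- For `x ∈ ∂Ω`, `Reach(∂Ω, x) = min(Reach(closure Ω, x), Reach(ℝⁿ \ Ω, x))`. -/
theorem stmt_8 {n : ℕ} (hn : 2 ≤ n) (Ω : Set (EuclideanSpace ℝ (Fin n)))
    (hΩ : IsOpen Ω) (hne : Ω.Nonempty) (hfr : (frontier Ω).Nonempty)
    (x : EuclideanSpace ℝ (Fin n)) (hx : x ∈ frontier Ω) :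
    reachAt (frontier Ω) x = min (reachAt (closure Ω) x) (reachAt Ωᶜ x) := by
  have hlow : ∀ U : Set (EuclideanSpace ℝ (Fin n)),
      IsLowerSet {r : ℝ≥0∞ | EMetric.ball x r ⊆ U} := by
    intro U r r' hle hr
    exact (EMetric.ball_subset_ball hle).trans hr
  have hset : {r : ℝ≥0∞ | EMetric.ball x r ⊆ Unp (frontier Ω)} =
      {r : ℝ≥0∞ | EMetric.ball x r ⊆ Unp (closure Ω)} ∩
      {r : ℝ≥0∞ | EMetric.ball x r ⊆ Unp Ωᶜ} := by
    rw [unp_frontier_eq hΩ hne hfr]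
    ext r
    simp [Set.subset_inter_iff]
  rw [reachAt, reachAt, reachAt, hset, sSup_inter_lower (hlow _) (hlow _)]
end

section
/- Let Ω ⊆ ℝⁿ be open, satisfying the ε-ball condition, and fix x₀ ∈ ∂Ω with direction vector d₀ = d_{x₀}. Work in coordinates where x₀ = 0 and d₀ is the last coordinate direction. Then for every x' in the open disk D_ε(0') ⊆ ℝ^{n−1}, the value φ⁺(x') = sup{x_n ∈ [−ε, ε] : (x', x_n) ∈ Ω} lies in (−ε, ε), the point (x', φ⁺(x')) belongs to ∂Ω, and |φ⁺(x')| ≤ ε − √(ε² − ‖x'‖²). -/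
/-!
Along the line `t ↦ x₀ + v + t d₀`, with `v ⟂ d₀` and `‖v‖ < ε`, each of the two tangent balls
cuts out a chord of half-length `√(ε² − ‖v‖²)`, centred at `t = −ε` for the inner ball and at
`t = ε` for the outer one. So every `t < −ε + √(ε² − ‖v‖²)` lies in the slice of `Ω`, no
`t > ε − √(ε² − ‖v‖²)` does, and the supremum of the slice is trapped between these two values.
It lies strictly below `ε`, so maximality and openness of `Ω` put the corresponding point on `∂Ω`.
-/

open Metric Set Filter Topology
open scoped RealInnerProductSpace

theorem map_sSup_mem_frontier {X : Type*} [TopologicalSpace X] {U : Set X} (hU : IsOpen U)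
    {γ : ℝ → X} (hγ : Continuous γ) {a b : ℝ} (hne : {t | t ∈ Icc a b ∧ γ t ∈ U}.Nonempty)
    (hlt : sSup {t | t ∈ Icc a b ∧ γ t ∈ U} < b) :
    γ (sSup {t | t ∈ Icc a b ∧ γ t ∈ U}) ∈ frontier U := by
  set S := {t | t ∈ Icc a b ∧ γ t ∈ U}
  have hbdd : BddAbove S := ⟨b, fun t ht => ht.1.2⟩
  refine ⟨map_mem_closure hγ (csSup_mem_closure hne hbdd) fun t ht => ht.2, ?_⟩
  rw [hU.interior_eq]
  intro hmem
  have hev : ∀ᶠ t in 𝓝 (sSup S), γ t ∈ U ∧ t < b :=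
    (hγ.continuousAt.eventually_mem (hU.mem_nhds hmem)).and (eventually_lt_nhds hlt)
  obtain ⟨t, hst, htU, htb⟩ := hev.exists_gt
  obtain ⟨t₀, ht₀⟩ := hne
  have hat : a ≤ t := ht₀.1.1.trans ((le_csSup hbdd ht₀).trans hst.le)
  exact (le_csSup hbdd ⟨⟨hat, htb.le⟩, htU⟩).not_gt hst

theorem sqrt_sq_sub_sq_le {ε : ℝ} (hε : 0 ≤ ε) (r : ℝ) : √(ε ^ 2 - r ^ 2) ≤ ε :=
  (Real.sqrt_le_left hε).2 (by nlinarith [sq_nonneg r])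

section InnerProductSpace

variable {E : Type*} [NormedAddCommGroup E] [InnerProductSpace ℝ E] {x d v : E} {ε : ℝ}

theorem norm_add_smul_sq_of_inner_eq_zero (hv : ⟪v, d⟫ = 0) (hd : ‖d‖ = 1) (t : ℝ) :
    ‖v + t • d‖ ^ 2 = ‖v‖ ^ 2 + t ^ 2 := by
  have hperp : ⟪v, t • d⟫ = 0 := by rw [real_inner_smul_right, hv, mul_zero]
  rw [sq, sq, sq, norm_add_sq_eq_norm_sq_add_norm_sq_real hperp, norm_smul, hd, mul_one,
    Real.norm_eq_abs, abs_mul_abs_self]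

theorem add_add_smul_mem_ball_iff (hv : ⟪v, d⟫ = 0) (hd : ‖d‖ = 1) (hε : 0 ≤ ε) (t c : ℝ) :
    x + v + t • d ∈ ball (x + c • d) ε ↔ |t - c| < √(ε ^ 2 - ‖v‖ ^ 2) := by
  have hdiff : x + v + t • d - (x + c • d) = v + (t - c) • d := by rw [sub_smul]; abel
  rw [mem_ball, dist_eq_norm, hdiff, Real.lt_sqrt (abs_nonneg _), sq_abs,
    ← sq_lt_sq₀ (norm_nonneg _) hε, norm_add_smul_sq_of_inner_eq_zero hv hd]
  constructor <;> intro h <;> linarith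

theorem Ico_subset_slice {Ω : Set E} (hv : ⟪v, d⟫ = 0) (hd : ‖d‖ = 1) (hε : 0 ≤ ε)
    (hin : ball (x - ε • d) ε ⊆ Ω) :
    Ico (-ε) (-ε + √(ε ^ 2 - ‖v‖ ^ 2)) ⊆ {t | t ∈ Icc (-ε) ε ∧ x + v + t • d ∈ Ω} := by
  intro t ⟨hlo, hhi⟩
  have hsε := sqrt_sq_sub_sq_le hε ‖v‖
  refine ⟨⟨hlo, by linarith⟩, hin ?_⟩
  rw [sub_eq_add_neg, ← neg_smul, add_add_smul_mem_ball_iff hv hd hε, abs_lt]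
  constructor <;> linarith

theorem sSup_slice_le {Ω : Set E} (hv : ⟪v, d⟫ = 0) (hd : ‖d‖ = 1) (hε : 0 ≤ ε)
    (hout : ball (x + ε • d) ε ⊆ (closure Ω)ᶜ) :
    sSup {t | t ∈ Icc (-ε) ε ∧ x + v + t • d ∈ Ω} ≤ ε - √(ε ^ 2 - ‖v‖ ^ 2) := by
  have hsε := sqrt_sq_sub_sq_le hε ‖v‖
  refine Real.sSup_le (fun t ⟨⟨_, hte⟩, htΩ⟩ => ?_) (by linarith)
  by_contra! hlt
  refine hout ?_ (subset_closure htΩ)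
  rw [add_add_smul_mem_ball_iff hv hd hε, abs_lt]
  constructor <;> linarith

end InnerProductSpace

theorem stmt_9_general {n : ℕ} (ε : ℝ) (hε : 0 < ε)
    (Ω : Set (EuclideanSpace ℝ (Fin n))) (hΩ : IsOpen Ω)
    (x₀ : EuclideanSpace ℝ (Fin n))
    (d₀ : EuclideanSpace ℝ (Fin n)) (hd₀ : ‖d₀‖ = 1)
    (h1 : ball (x₀ - ε • d₀) ε ⊆ Ω) (h2 : ball (x₀ + ε • d₀) ε ⊆ (closure Ω)ᶜ)
    (v : EuclideanSpace ℝ (Fin n)) (hv : ⟪v, d₀⟫ = 0) (hvε : ‖v‖ < ε) :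
    sSup {t : ℝ | t ∈ Set.Icc (-ε) ε ∧ x₀ + v + t • d₀ ∈ Ω} ∈ Set.Ioo (-ε) ε ∧
      x₀ + v + (sSup {t : ℝ | t ∈ Set.Icc (-ε) ε ∧ x₀ + v + t • d₀ ∈ Ω}) • d₀ ∈ frontier Ω ∧
      |sSup {t : ℝ | t ∈ Set.Icc (-ε) ε ∧ x₀ + v + t • d₀ ∈ Ω}|
        ≤ ε - Real.sqrt (ε ^ 2 - ‖v‖ ^ 2) := by
  set S := {t : ℝ | t ∈ Set.Icc (-ε) ε ∧ x₀ + v + t • d₀ ∈ Ω}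
  have hs : 0 < √(ε ^ 2 - ‖v‖ ^ 2) :=
    Real.sqrt_pos.2 (sub_pos.2 (pow_lt_pow_left₀ hvε (norm_nonneg v) two_ne_zero))
  have hsub : Ico (-ε) (-ε + √(ε ^ 2 - ‖v‖ ^ 2)) ⊆ S := Ico_subset_slice hv hd₀ hε.le h1
  have hbdd : BddAbove S := ⟨ε, fun t ht => ht.1.2⟩
  have hlow : -ε + √(ε ^ 2 - ‖v‖ ^ 2) ≤ sSup S :=
    (csSup_Ico (by linarith)).ge.trans (csSup_le_csSup hbdd (nonempty_Ico.2 (by linarith)) hsub)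
  have hup : sSup S ≤ ε - √(ε ^ 2 - ‖v‖ ^ 2) := sSup_slice_le hv hd₀ hε.le h2
  refine ⟨⟨by linarith, by linarith⟩, ?_, abs_le.2 ⟨by linarith, hup⟩⟩
  exact map_sSup_mem_frontier (γ := fun t => x₀ + v + t • d₀) hΩ (by fun_prop)
    ((nonempty_Ico.2 (by linarith)).mono hsub) (by linarith)

/-- Local parametrization from above: in the frame at `x₀ ∈ ∂Ω` (origin `x₀`, last axis `d₀`),
for every `x'` in the disk of radius `ε` of the hyperplane `d₀^⊥`, the value
`φ⁺(x') = sup {t ∈ [−ε, ε] : x₀ + x' + t d₀ ∈ Ω}` lies in `(−ε, ε)`, the corresponding point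
lies on `∂Ω`, and `|φ⁺(x')| ≤ ε − √(ε² − ‖x'‖²)`. -/
theorem stmt_9 {n : ℕ} (hn : 2 ≤ n) (ε : ℝ) (hε : 0 < ε)
    (Ω : Set (EuclideanSpace ℝ (Fin n))) (hΩ : IsOpen Ω)
    (hball : ∀ x ∈ frontier Ω, ∃ d : EuclideanSpace ℝ (Fin n), ‖d‖ = 1 ∧
      ball (x - ε • d) ε ⊆ Ω ∧ ball (x + ε • d) ε ⊆ (closure Ω)ᶜ)
    (x₀ : EuclideanSpace ℝ (Fin n)) (hx₀ : x₀ ∈ frontier Ω)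
    (d₀ : EuclideanSpace ℝ (Fin n)) (hd₀ : ‖d₀‖ = 1)
    (h1 : ball (x₀ - ε • d₀) ε ⊆ Ω) (h2 : ball (x₀ + ε • d₀) ε ⊆ (closure Ω)ᶜ)
    (v : EuclideanSpace ℝ (Fin n)) (hv : ⟪v, d₀⟫ = 0) (hvε : ‖v‖ < ε) :
    sSup {t : ℝ | t ∈ Set.Icc (-ε) ε ∧ x₀ + v + t • d₀ ∈ Ω} ∈ Set.Ioo (-ε) ε ∧
      x₀ + v + (sSup {t : ℝ | t ∈ Set.Icc (-ε) ε ∧ x₀ + v + t • d₀ ∈ Ω}) • d₀ ∈ frontier Ω ∧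
      |sSup {t : ℝ | t ∈ Set.Icc (-ε) ε ∧ x₀ + v + t • d₀ ∈ Ω}|
        ≤ ε - Real.sqrt (ε ^ 2 - ‖v‖ ^ 2) :=
  stmt_9_general ε hε Ω hΩ x₀ d₀ hd₀ h1 h2 v hv hvε
end

section
/- Let Ω ⊆ ℝⁿ satisfy the ε-ball condition, work in the local frame at x₀ ∈ ∂Ω as above, and let r = (√3/2)ε. Suppose x' ∈ D_r(0'), x_n ∈ (−ε, ε) with (x', x_n) ∈ ∂Ω, and let x̃_n ∈ ℝ satisfy |x̃_n| ≤ ε − √(ε² − ‖x'‖²). Then x̃_n < x_n implies (x', x̃_n) ∈ Ω, and x̃_n > x_n implies (x', x̃_n) ∈ ℝⁿ \ closure(Ω). -/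
/-!
The tangent balls at `x₀` confine the boundary point `p = x₀ + v + t • d₀` to
`|t| ≤ ε - √(ε² - ‖v‖²)`. The interior ball at each of `x₀`, `p` is disjoint from the exterior
ball at the other; by the parallelogram law this forces the normal `d` at `p` to satisfy
`2ε²⟪d, d₀⟫ ≥ 2ε² - ‖p - x₀‖²`. Since `‖v‖ < (√3/2)ε`, moving from `p` by `(t' - t) • d₀` then
lands in the interior ball at `p` when `t' < t` and in the exterior one when `t < t'`.
-/

open Metric
open scoped RealInnerProductSpace

section

variable {E : Type*} [NormedAddCommGroup E] [InnerProductSpace ℝ E]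

theorem sq_le_norm_sq_add_norm_sq {w u : E} {r : ℝ} (hr : 0 ≤ r)
    (hsub : r ≤ ‖w - u‖) (hadd : r ≤ ‖w + u‖) : r ^ 2 ≤ ‖w‖ ^ 2 + ‖u‖ ^ 2 := by
  have hpar := parallelogram_law_with_norm ℝ w u
  nlinarith [pow_le_pow_left₀ hr hsub 2, pow_le_pow_left₀ hr hadd 2]

theorem norm_smul_add_smul_sq {d e : E} (hd : ‖d‖ = 1) (he : ‖e‖ = 1) (a b : ℝ) :
    ‖a • e + b • d‖ ^ 2 = a ^ 2 + 2 * a * b * ⟪e, d⟫ + b ^ 2 := by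
  rw [norm_add_sq_real, real_inner_smul_left, real_inner_smul_right, norm_smul, norm_smul,
    hd, he, Real.norm_eq_abs, Real.norm_eq_abs, mul_one, mul_one, sq_abs, sq_abs]
  ring

theorem add_smul_mem_ball_sub_smul {d e : E} (hd : ‖d‖ = 1) (he : ‖e‖ = 1) {ε s : ℝ}
    (hε : 0 ≤ ε) (h : s * (s + 2 * ε * ⟪e, d⟫) < 0) (p : E) :
    p + s • e ∈ ball (p - ε • d) ε := by
  have hsq : ‖s • e + ε • d‖ ^ 2 < ε ^ 2 := by
    rw [norm_smul_add_smul_sq hd he]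
    linarith
  rw [mem_ball, dist_eq_norm, show p + s • e - (p - ε • d) = s • e + ε • d by abel]
  exact lt_of_pow_lt_pow_left₀ 2 hε hsq

theorem norm_add_smul_sq_of_inner_eq_zero_s10 {v e : E} (hv : ⟪v, e⟫ = 0) (he : ‖e‖ = 1) (a : ℝ) :
    ‖v + a • e‖ ^ 2 = ‖v‖ ^ 2 + a ^ 2 := by
  rw [norm_add_sq_real, real_inner_smul_right, hv, norm_smul, he, mul_one, Real.norm_eq_abs,
    sq_abs]
  ring

theorem sqrt_sq_sub_norm_sq_le_abs {v e : E} (hv : ⟪v, e⟫ = 0) (he : ‖e‖ = 1) {ε a : ℝ}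
    (hε : 0 ≤ ε) (h : ε ≤ ‖v + a • e‖) : √(ε ^ 2 - ‖v‖ ^ 2) ≤ |a| := by
  rw [Real.sqrt_le_left (abs_nonneg a), sq_abs]
  nlinarith [pow_le_pow_left₀ hε h 2, norm_add_smul_sq_of_inner_eq_zero_s10 hv he a]

def HasTangentBalls (Ω : Set E) (ε : ℝ) (x d : E) : Prop :=
  ball (x - ε • d) ε ⊆ Ω ∧ ball (x + ε • d) ε ⊆ (closure Ω)ᶜ

namespace HasTangentBalls

variable {Ω : Set E} {ε : ℝ} {x d : E}

theorem le_dist_of_mem_frontier (h : HasTangentBalls Ω ε x d) {p : E} (hp : p ∈ frontier Ω) :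
    ε ≤ dist p (x - ε • d) ∧ ε ≤ dist p (x + ε • d) := by
  constructor
  · by_contra! hlt
    exact hp.2 (interior_maximal h.1 isOpen_ball (mem_ball.2 hlt))
  · by_contra! hlt
    exact h.2 (mem_ball.2 hlt) hp.1

theorem two_mul_le_dist (hε : 0 < ε) (h : HasTangentBalls Ω ε x d) {y e : E}
    (h' : HasTangentBalls Ω ε y e) : 2 * ε ≤ dist (x - ε • d) (y + ε • e) := by
  rw [two_mul, ← disjoint_ball_ball_iff hε hε]
  exact Set.disjoint_of_subset (h.1.trans subset_closure) h'.2 disjoint_compl_right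

theorem two_mul_sq_sub_dist_sq_le_inner (hε : 0 < ε) (hd : ‖d‖ = 1)
    (h : HasTangentBalls Ω ε x d) {y e : E} (he : ‖e‖ = 1) (h' : HasTangentBalls Ω ε y e) :
    2 * ε ^ 2 - dist x y ^ 2 ≤ 2 * ε ^ 2 * ⟪d, e⟫ := by
  have hsub := h.two_mul_le_dist hε h'
  have hadd := h'.two_mul_le_dist hε h
  rw [dist_eq_norm, show x - ε • d - (y + ε • e) = (x - y) - ε • (d + e) by module] at hsub
  rw [dist_eq_norm, show y - ε • e - (x + ε • d) = -((x - y) + ε • (d + e)) by module,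
    norm_neg] at hadd
  have hkey := sq_le_norm_sq_add_norm_sq (by positivity) hsub hadd
  rw [smul_add, norm_smul_add_smul_sq he hd, ← dist_eq_norm] at hkey
  nlinarith

theorem add_smul_mem_of_neg (hε : 0 < ε) (hd : ‖d‖ = 1) (h : HasTangentBalls Ω ε x d)
    {e : E} (he : ‖e‖ = 1) {s : ℝ} (hs : s < 0) (hse : -s < 2 * ε * ⟪e, d⟫) :
    x + s • e ∈ Ω :=
  h.1 (add_smul_mem_ball_sub_smul hd he hε.le (mul_neg_of_neg_of_pos hs (by linarith)) x)

theorem add_smul_mem_compl_closure_of_pos (hε : 0 < ε) (hd : ‖d‖ = 1)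
    (h : HasTangentBalls Ω ε x d) {e : E} (he : ‖e‖ = 1) {s : ℝ} (hs : 0 < s)
    (hse : s < 2 * ε * ⟪e, d⟫) : x + s • e ∈ (closure Ω)ᶜ := by
  have hmem := add_smul_mem_ball_sub_smul (norm_neg d ▸ hd) he hε.le (d := -d) (s := s)
    (by rw [inner_neg_right]; exact mul_neg_of_pos_of_neg hs (by linarith)) x
  rw [smul_neg, sub_neg_eq_add] at hmem
  exact h.2 hmem

theorem abs_le_sub_sqrt (hε : 0 < ε) (hd : ‖d‖ = 1) (h : HasTangentBalls Ω ε x d) {v : E}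
    (hv : ⟪v, d⟫ = 0) {t : ℝ} (ht : t ∈ Set.Ioo (-ε) ε) (hp : x + v + t • d ∈ frontier Ω) :
    |t| ≤ ε - √(ε ^ 2 - ‖v‖ ^ 2) := by
  obtain ⟨hin, hout⟩ := h.le_dist_of_mem_frontier hp
  rw [dist_eq_norm, show x + v + t • d - (x - ε • d) = v + (t + ε) • d by module] at hin
  rw [dist_eq_norm, show x + v + t • d - (x + ε • d) = v + (t - ε) • d by module] at hout
  have hin' := sqrt_sq_sub_norm_sq_le_abs hv hd hε.le hin
  have hout' := sqrt_sq_sub_norm_sq_le_abs hv hd hε.le hout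
  rw [abs_of_pos (by linarith [ht.1])] at hin'
  rw [abs_of_neg (by linarith [ht.2])] at hout'
  exact abs_le.2 ⟨by linarith, by linarith⟩

end HasTangentBalls

end

theorem half_lt_sqrt_sq_sub_sq {ε a : ℝ} (hε : 0 < ε) (ha : |a| < √3 / 2 * ε) :
    ε / 2 < √(ε ^ 2 - a ^ 2) := by
  have h3 : √3 ^ 2 = 3 := Real.sq_sqrt (by norm_num)
  rw [Real.lt_sqrt (by positivity)]
  nlinarith [sq_abs a, abs_nonneg a, Real.sqrt_nonneg 3]

theorem mul_abs_sub_lt {ε q t t' : ℝ} (hε : 0 < ε) (hq : ε / 2 < q) (ht : |t| ≤ ε - q)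
    (ht' : |t'| ≤ ε - q) : ε * |t' - t| < ε ^ 2 + q ^ 2 - t ^ 2 := by
  have htt : |t' - t| ≤ |t'| + |t| := abs_sub _ _
  nlinarith [sq_abs t, abs_nonneg t]

theorem stmt_10_general {n : ℕ} (ε : ℝ) (hε : 0 < ε)
    (Ω : Set (EuclideanSpace ℝ (Fin n)))
    (hball : ∀ x ∈ frontier Ω, ∃ d : EuclideanSpace ℝ (Fin n), ‖d‖ = 1 ∧
      ball (x - ε • d) ε ⊆ Ω ∧ ball (x + ε • d) ε ⊆ (closure Ω)ᶜ)
    (x₀ : EuclideanSpace ℝ (Fin n))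
    (d₀ : EuclideanSpace ℝ (Fin n)) (hd₀ : ‖d₀‖ = 1)
    (h1 : ball (x₀ - ε • d₀) ε ⊆ Ω) (h2 : ball (x₀ + ε • d₀) ε ⊆ (closure Ω)ᶜ)
    (v : EuclideanSpace ℝ (Fin n)) (hv : ⟪v, d₀⟫ = 0)
    (hvr : ‖v‖ < Real.sqrt 3 / 2 * ε)
    (t : ℝ) (ht : t ∈ Set.Ioo (-ε) ε) (htΩ : x₀ + v + t • d₀ ∈ frontier Ω)
    (t' : ℝ) (ht' : |t'| ≤ ε - Real.sqrt (ε ^ 2 - ‖v‖ ^ 2)) :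
    (t' < t → x₀ + v + t' • d₀ ∈ Ω) ∧ (t < t' → x₀ + v + t' • d₀ ∈ (closure Ω)ᶜ) := by
  obtain ⟨d, hd, hp_in, hp_out⟩ := hball _ htΩ
  have hx₀ : HasTangentBalls Ω ε x₀ d₀ := ⟨h1, h2⟩
  have hp : HasTangentBalls Ω ε (x₀ + v + t • d₀) d := ⟨hp_in, hp_out⟩
  set q := √(ε ^ 2 - ‖v‖ ^ 2)
  have hq : ε / 2 < q := half_lt_sqrt_sq_sub_sq hε (by rwa [abs_norm])
  have hvq : ‖v‖ ^ 2 = ε ^ 2 - q ^ 2 := by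
    rw [Real.sq_sqrt (Real.sqrt_pos.1 (by linarith)).le]; ring
  have hdist : dist (x₀ + v + t • d₀) x₀ ^ 2 = ‖v‖ ^ 2 + t ^ 2 := by
    rw [dist_eq_norm, add_assoc, add_sub_cancel_left,
      norm_add_smul_sq_of_inner_eq_zero_s10 hv hd₀]
  have hinner := hp.two_mul_sq_sub_dist_sq_le_inner hε hd hd₀ hx₀
  have hgap := mul_abs_sub_lt hε hq (hx₀.abs_le_sub_sqrt hε hd₀ hv ht htΩ) ht'
  have hstep : |t' - t| < 2 * ε * ⟪d₀, d⟫ := by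
    refine lt_of_mul_lt_mul_left ?_ hε.le
    rw [real_inner_comm]
    linarith
  rw [show x₀ + v + t' • d₀ = x₀ + v + t • d₀ + (t' - t) • d₀ by module]
  refine ⟨fun h => hp.add_smul_mem_of_neg hε hd hd₀ (by linarith) ?_,
    fun h => hp.add_smul_mem_compl_closure_of_pos hε hd hd₀ (by linarith) ?_⟩
  · rwa [abs_of_neg (by linarith)] at hstep
  · rwa [abs_of_pos (by linarith)] at hstep

/-- In the local frame at `x₀ ∈ ∂Ω`, with `r = (√3/2)ε`: if `(x', x_n) ∈ ∂Ω` with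
`‖x'‖ < r`, `x_n ∈ (−ε, ε)`, and `|x̃_n| ≤ ε − √(ε² − ‖x'‖²)`, then `x̃_n < x_n` implies
`(x', x̃_n) ∈ Ω` and `x̃_n > x_n` implies `(x', x̃_n) ∉ closure Ω`. -/
theorem stmt_10 {n : ℕ} (hn : 2 ≤ n) (ε : ℝ) (hε : 0 < ε)
    (Ω : Set (EuclideanSpace ℝ (Fin n))) (hΩ : IsOpen Ω)
    (hball : ∀ x ∈ frontier Ω, ∃ d : EuclideanSpace ℝ (Fin n), ‖d‖ = 1 ∧
      ball (x - ε • d) ε ⊆ Ω ∧ ball (x + ε • d) ε ⊆ (closure Ω)ᶜ)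
    (x₀ : EuclideanSpace ℝ (Fin n)) (hx₀ : x₀ ∈ frontier Ω)
    (d₀ : EuclideanSpace ℝ (Fin n)) (hd₀ : ‖d₀‖ = 1)
    (h1 : ball (x₀ - ε • d₀) ε ⊆ Ω) (h2 : ball (x₀ + ε • d₀) ε ⊆ (closure Ω)ᶜ)
    (v : EuclideanSpace ℝ (Fin n)) (hv : ⟪v, d₀⟫ = 0)
    (hvr : ‖v‖ < Real.sqrt 3 / 2 * ε)
    (t : ℝ) (ht : t ∈ Set.Ioo (-ε) ε) (htΩ : x₀ + v + t • d₀ ∈ frontier Ω)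
    (t' : ℝ) (ht' : |t'| ≤ ε - Real.sqrt (ε ^ 2 - ‖v‖ ^ 2)) :
    (t' < t → x₀ + v + t' • d₀ ∈ Ω) ∧ (t < t' → x₀ + v + t' • d₀ ∈ (closure Ω)ᶜ) :=
  stmt_10_general ε hε Ω hball x₀ d₀ hd₀ h1 h2 v hv hvr t ht htΩ t' ht'
end

section
/- Let Ω ⊆ ℝⁿ be open and satisfy the ε-ball condition. Then Ω satisfies the α-cone property for α = f⁻¹(ε), where f(α) = 2α/cos α. That is, for every x ∈ ∂Ω there is a unit vector ξ_x (namely ξ_x = −d_x) such that, for every y ∈ B_α(x) ∩ Ω, the open cone C_α(y, ξ_x) = {z ∈ B_α(y) : ‖z − y‖ cos α < ⟨z − y, ξ_x⟩} is contained in Ω. -/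
/-!
If some `z` of the cone lay outside `Ω`, let `w` be the first point of the segment `[y, z]` outside
`Ω`; it lies on `∂Ω`. The segment reaches `w` from inside `Ω`, so it cannot come out of the exterior
ball at `w`, whence `⟪z - y, d w⟫ ≥ 0`. On the other hand, the interior ball at each boundary point
is disjoint from the exterior ball at any other, which by the parallelogram law makes `d`
`1/ε`-Lipschitz on `∂Ω`. As `‖w - x‖ < 2α = ε cos α`, this gives `‖d w - d x‖ ≤ cos α`, and then the
cone condition at `x` forces `⟪z - y, d w⟫ < 0`.
-/

open Metric
open scoped RealInnerProductSpace

open Filter Topology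

theorem IsOpen.exists_first_mem_frontier {X : Type*} [TopologicalSpace X] {Ω : Set X}
    (hΩ : IsOpen Ω) {γ : ℝ → X} (hγ : Continuous γ) (h0 : γ 0 ∈ Ω) (h1 : γ 1 ∉ Ω) :
    ∃ t₀ ∈ Set.Ioc (0 : ℝ) 1, γ t₀ ∈ frontier Ω ∧ ∀ t ∈ Set.Ico 0 t₀, γ t ∈ Ω := by
  set T := Set.Icc (0 : ℝ) 1 ∩ γ ⁻¹' Ωᶜ
  have hT : IsClosed T := isClosed_Icc.inter (hΩ.isClosed_compl.preimage hγ)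
  have hTbdd : BddBelow T := ⟨0, fun t ht => ht.1.1⟩
  obtain ⟨⟨ht₀0, ht₀1⟩, hexit⟩ : sInf T ∈ T := hT.csInf_mem ⟨1, by simp [T, h1]⟩ hTbdd
  have hpos : 0 < sInf T := ht₀0.lt_of_ne fun h => hexit (h ▸ h0)
  have hbefore : ∀ t ∈ Set.Ico 0 (sInf T), γ t ∈ Ω := fun t ⟨ht0, ht⟩ => by
    by_contra hout
    exact ht.not_ge (csInf_le hTbdd ⟨⟨ht0, ht.le.trans ht₀1⟩, hout⟩)
  refine ⟨sInf T, ⟨hpos, ht₀1⟩, ?_, hbefore⟩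
  rw [hΩ.frontier_eq]
  have hlim := (hγ.tendsto (sInf T)).mono_left (nhdsWithin_le_nhds (s := Set.Iio (sInf T)))
  refine ⟨mem_closure_of_tendsto hlim ?_, hexit⟩
  filter_upwards [Ioo_mem_nhdsLT hpos] with t ht using hbefore t ⟨ht.1.le, ht.2⟩

section

variable {E : Type*} [NormedAddCommGroup E] [InnerProductSpace ℝ E]

theorem eventually_add_smul_mem_ball {c w v : E} {r : ℝ} (hw : ‖w - c‖ = r)
    (hv : ⟪v, w - c⟫ < 0) : ∀ᶠ s in 𝓝[>] (0 : ℝ), w + s • v ∈ ball c r := by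
  -- `‖w + s • v - c‖² - r² = s * (2 ⟪v, w - c⟫ + s ‖v‖²)`, whose second factor is negative near 0.
  have hneg : ∀ᶠ s in 𝓝 (0 : ℝ), 2 * ⟪v, w - c⟫ + s * ‖v‖ ^ 2 < 0 := by
    have hcont : Continuous fun s : ℝ => 2 * ⟪v, w - c⟫ + s * ‖v‖ ^ 2 := by fun_prop
    exact hcont.tendsto 0 |>.eventually (gt_mem_nhds (by simp; linarith))
  filter_upwards [nhdsWithin_le_nhds hneg, self_mem_nhdsWithin] with s hs (hs0 : 0 < s)
  have hexp : ‖w + s • v - c‖ ^ 2 = r ^ 2 + s * (2 * ⟪v, w - c⟫ + s * ‖v‖ ^ 2) := by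
    rw [show w + s • v - c = (w - c) + s • v by abel, norm_add_sq_real, norm_smul,
      real_inner_smul_right, real_inner_comm, hw, Real.norm_eq_abs, abs_of_pos hs0]
    ring
  have hr : 0 ≤ r := hw ▸ norm_nonneg _
  rw [mem_ball, dist_eq_norm]
  nlinarith [mul_neg_of_pos_of_neg hs0 hs, norm_nonneg (w + s • v - c)]

variable {Ω : Set E} {ε : ℝ}

theorem inner_nonneg_of_eventually_sub_smul_mem {w d u : E} (hε : 0 < ε) (hd : ‖d‖ = 1)
    (hout : ball (w + ε • d) ε ⊆ (closure Ω)ᶜ) (happroach : ∀ᶠ s in 𝓝[>] (0 : ℝ), w - s • u ∈ Ω) :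
    0 ≤ ⟪u, d⟫ := by
  by_contra! hneg
  have hw : ‖w - (w + ε • d)‖ = ε := by simp [norm_smul, hd, hε.le]
  have hv : ⟪-u, w - (w + ε • d)⟫ < 0 := by
    simpa [inner_smul_right] using mul_neg_of_pos_of_neg hε hneg
  obtain ⟨s, hsball, hsΩ⟩ := ((eventually_add_smul_mem_ball hw hv).and happroach).exists
  rw [smul_neg, ← sub_eq_add_neg] at hsball
  exact hout hsball (subset_closure hsΩ)

theorem two_mul_le_dist_of_ball_subset_of_ball_subset_compl_closure {c₁ c₂ : E} (hε : 0 < ε)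
    (h₁ : ball c₁ ε ⊆ Ω) (h₂ : ball c₂ ε ⊆ (closure Ω)ᶜ) : 2 * ε ≤ dist c₁ c₂ := by
  rw [two_mul, ← disjoint_ball_ball_iff hε hε]
  exact (disjoint_compl_right.mono_left subset_closure).mono h₁ h₂

theorem mul_norm_sub_le_of_le_norm_add_of_le_norm_sub {a d₁ d₂ : E} (hε : 0 ≤ ε)
    (hd₁ : ‖d₁‖ = 1) (hd₂ : ‖d₂‖ = 1) (hadd : 2 * ε ≤ ‖a + ε • (d₁ + d₂)‖)
    (hsub : 2 * ε ≤ ‖a - ε • (d₁ + d₂)‖) : ε * ‖d₁ - d₂‖ ≤ ‖a‖ := by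
  have hpar := parallelogram_law_with_norm ℝ a (ε • (d₁ + d₂))
  have hunit := parallelogram_law_with_norm ℝ d₁ d₂
  rw [hd₁, hd₂] at hunit
  rw [norm_smul, Real.norm_eq_abs, abs_of_nonneg hε] at hpar
  have hsq : (ε * ‖d₁ - d₂‖) ^ 2 ≤ ‖a‖ ^ 2 := by
    nlinarith [mul_self_le_mul_self (by positivity) hadd, mul_self_le_mul_self (by positivity) hsub]
  exact (pow_le_pow_iff_left₀ (by positivity) (norm_nonneg a) two_ne_zero).mp hsq

theorem mul_norm_sub_le_of_ball_condition {x w d₁ d₂ : E} (hε : 0 < ε) (hd₁ : ‖d₁‖ = 1)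
    (hd₂ : ‖d₂‖ = 1) (hx_in : ball (x - ε • d₁) ε ⊆ Ω) (hx_out : ball (x + ε • d₁) ε ⊆ (closure Ω)ᶜ)
    (hw_in : ball (w - ε • d₂) ε ⊆ Ω) (hw_out : ball (w + ε • d₂) ε ⊆ (closure Ω)ᶜ) :
    ε * ‖d₁ - d₂‖ ≤ ‖w - x‖ := by
  refine mul_norm_sub_le_of_le_norm_add_of_le_norm_sub hε.le hd₁ hd₂ ?_ ?_
  · have h := two_mul_le_dist_of_ball_subset_of_ball_subset_compl_closure hε hx_in hw_out
    rwa [dist_eq_norm', show w + ε • d₂ - (x - ε • d₁) = w - x + ε • (d₁ + d₂) by module] at h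
  · have h := two_mul_le_dist_of_ball_subset_of_ball_subset_compl_closure hε hw_in hx_out
    rwa [dist_eq_norm, show w - ε • d₂ - (x + ε • d₁) = w - x - ε • (d₁ + d₂) by module] at h

end

theorem stmt_15_general {n : ℕ} (ε : ℝ) (hε : 0 < ε)
    (Ω : Set (EuclideanSpace ℝ (Fin n))) (hΩ : IsOpen Ω)
    (d : EuclideanSpace ℝ (Fin n) → EuclideanSpace ℝ (Fin n))
    (hball : ∀ x ∈ frontier Ω, ‖d x‖ = 1 ∧
      ball (x - ε • d x) ε ⊆ Ω ∧ ball (x + ε • d x) ε ⊆ (closure Ω)ᶜ)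
    (α : ℝ) (hα : α ∈ Set.Ioo 0 (Real.pi / 2)) (hfα : 2 * α / Real.cos α = ε) :
    ∀ x ∈ frontier Ω, ∀ y ∈ ball x α ∩ Ω,
      {z ∈ ball y α | ‖z - y‖ * Real.cos α < ⟪z - y, -(d x)⟫} ⊆ Ω := by
  intro x hx y ⟨hyx, hyΩ⟩ z ⟨hzy, hcone⟩
  by_contra hzΩ
  have hcos : 0 < Real.cos α := Real.cos_pos_of_mem_Ioo ⟨by linarith [hα.1, Real.pi_pos], hα.2⟩
  obtain ⟨t₀, ⟨ht₀0, ht₀1⟩, hw, hbefore⟩ := hΩ.exists_first_mem_frontier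
    (γ := fun t => y + t • (z - y)) (by fun_prop) (by simpa using hyΩ) (by simpa using hzΩ)
  set w := y + t₀ • (z - y)
  obtain ⟨hdx, hx_in, hx_out⟩ := hball x hx
  obtain ⟨hdw, hw_in, hw_out⟩ := hball w hw
  have happroach : ∀ᶠ s in 𝓝[>] (0 : ℝ), w - s • (z - y) ∈ Ω := by
    filter_upwards [Ioo_mem_nhdsGT ht₀0] with s hs
    simpa [w, sub_smul, add_sub_assoc] using
      hbefore (t₀ - s) ⟨by linarith [hs.2], by linarith [hs.1]⟩
  have hinner : 0 ≤ ⟪z - y, d w⟫ := inner_nonneg_of_eventually_sub_smul_mem hε hdw hw_out happroach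
  have hwy : ‖w - y‖ < α := by
    rw [show w - y = t₀ • (z - y) by simp [w], norm_smul, Real.norm_of_nonneg ht₀0.le]
    rw [mem_ball, dist_eq_norm] at hzy
    nlinarith [norm_nonneg (z - y)]
  have hwx : ‖w - x‖ < ε * Real.cos α := by
    rw [← hfα, div_mul_cancel₀ _ hcos.ne']
    rw [mem_ball, dist_eq_norm] at hyx
    linarith [norm_sub_le_norm_sub_add_norm_sub w y x]
  have hdd : ‖d w - d x‖ ≤ Real.cos α := by
    have h := mul_norm_sub_le_of_ball_condition hε hdx hdw hx_in hx_out hw_in hw_out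
    rw [norm_sub_rev]
    nlinarith
  have hneg : ⟪z - y, d w⟫ < 0 := calc
    ⟪z - y, d w⟫ = ⟪z - y, d x⟫ + ⟪z - y, d w - d x⟫ := by rw [inner_sub_right]; ring
    _ ≤ ⟪z - y, d x⟫ + ‖z - y‖ * ‖d w - d x‖ := by gcongr; exact real_inner_le_norm _ _
    _ ≤ ⟪z - y, d x⟫ + ‖z - y‖ * Real.cos α := by gcongr
    _ < 0 := by rw [inner_neg_right] at hcone; linarith
  linarith

/-- If `Ω` satisfies the ε-ball condition, then `Ω` satisfies the `α`-cone property with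
`α = f⁻¹(ε)`, `f(α) = 2α/cos α`: for every `x ∈ ∂Ω`, the unit vector `ξ_x = −d_x` is such
that for any `y ∈ B_α(x) ∩ Ω`, the open cone
`C_α(y, ξ_x) = {z ∈ B_α(y) : ‖z − y‖ cos α < ⟨z − y, ξ_x⟩}` is contained in `Ω`. -/
theorem stmt_15 {n : ℕ} (hn : 2 ≤ n) (ε : ℝ) (hε : 0 < ε)
    (Ω : Set (EuclideanSpace ℝ (Fin n))) (hΩ : IsOpen Ω)
    (d : EuclideanSpace ℝ (Fin n) → EuclideanSpace ℝ (Fin n))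
    (hball : ∀ x ∈ frontier Ω, ‖d x‖ = 1 ∧
      ball (x - ε • d x) ε ⊆ Ω ∧ ball (x + ε • d x) ε ⊆ (closure Ω)ᶜ)
    (α : ℝ) (hα : α ∈ Set.Ioo 0 (Real.pi / 2)) (hfα : 2 * α / Real.cos α = ε) :
    ∀ x ∈ frontier Ω, ∀ y ∈ ball x α ∩ Ω,
      {z ∈ ball y α | ‖z - y‖ * Real.cos α < ⟪z - y, -(d x)⟫} ⊆ Ω :=
  stmt_15_general ε hε Ω hΩ d hball α hα hfα
end

section
/- Let Ω ⊆ ℝⁿ satisfy the ε-ball condition and let φ be the local graph representing ∂Ω near x₀ ∈ ∂Ω (in the frame with origin x₀ and last axis d_{x₀}). Then the restriction of φ to the closed disk of radius r̃ = (√2/4) f⁻¹(ε), where f(α) = 2α/cos α, is (1/tan(f⁻¹(ε)))-Lipschitz continuous. -/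
open Metric
open scoped RealInnerProductSpace

/-!
The touching balls at `x₀` squeeze the graph between the paraboloids `±‖v‖² / ε`, so on the
small disk the boundary point over `w` lies within `ε cos α / 4` of `x₀`. Touching-ball directions
move at most `1 / ε` times as fast as their base points (the interior ball at one point misses the
exterior ball at the other), so the direction `d` there is within `cos α / 4` of `d₀`, and the
interior ball along `d` contains a short cone of half-angle `α` around `-d₀`. If `φ` rose faster than
`cot α` from `v` to `w`, a point just above the graph over `v` would lie in that cone, hence in `Ω`.
-/

section

variable {E : Type*} [NormedAddCommGroup E] [InnerProductSpace ℝ E]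

def HasTouchingBalls (Ω : Set E) (ε : ℝ) (x d : E) : Prop :=
  ball (x - ε • d) ε ⊆ Ω ∧ ball (x + ε • d) ε ⊆ (closure Ω)ᶜ

theorem add_mem_ball_sub_smul_iff {x u d : E} {ε : ℝ} (hd : ‖d‖ = 1) (hε : 0 < ε) :
    x + u ∈ ball (x - ε • d) ε ↔ ‖u‖ ^ 2 + 2 * ε * ⟪u, d⟫ < 0 := by
  rw [mem_ball, dist_eq_norm, show x + u - (x - ε • d) = u + ε • d by abel,
    ← sq_lt_sq₀ (norm_nonneg _) hε.le, norm_add_sq_real, norm_smul, real_inner_smul_right, hd,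
    Real.norm_eq_abs, abs_of_pos hε]
  constructor <;> intro h <;> linarith

theorem add_mem_ball_add_smul_iff {x u d : E} {ε : ℝ} (hd : ‖d‖ = 1) (hε : 0 < ε) :
    x + u ∈ ball (x + ε • d) ε ↔ ‖u‖ ^ 2 < 2 * ε * ⟪u, d⟫ := by
  have := add_mem_ball_sub_smul_iff (x := x) (u := u) (norm_neg d ▸ hd) hε
  rw [smul_neg, sub_neg_eq_add, inner_neg_right] at this
  rw [this]
  constructor <;> intro h <;> linarith

theorem norm_add_smul_sq {u d : E} (hud : ⟪u, d⟫ = 0) (hd : ‖d‖ = 1) (t : ℝ) :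
    ‖u + t • d‖ ^ 2 = ‖u‖ ^ 2 + t ^ 2 := by
  rw [norm_add_sq_real, real_inner_smul_right, hud, norm_smul, hd, Real.norm_eq_abs, mul_one,
    sq_abs]
  ring

theorem inner_add_smul_self {u d : E} (hud : ⟪u, d⟫ = 0) (hd : ‖d‖ = 1) (t : ℝ) :
    ⟪u + t • d, d⟫ = t := by
  rw [inner_add_left, hud, real_inner_smul_left, real_inner_self_eq_norm_sq, hd]
  ring

theorem two_mul_le_dist_of_ball_subset {Ω : Set E} {c₁ c₂ : E} {ε : ℝ} (hε : 0 < ε)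
    (h₁ : ball c₁ ε ⊆ Ω) (h₂ : ball c₂ ε ⊆ (closure Ω)ᶜ) : 2 * ε ≤ dist c₁ c₂ := by
  rw [two_mul, ← disjoint_ball_ball_iff hε hε]
  exact (disjoint_compl_right.mono_left subset_closure).mono h₁ h₂

theorem HasTouchingBalls.mul_norm_sub_le {Ω : Set E} {ε : ℝ} {x y dx dy : E} (hε : 0 < ε)
    (hx : HasTouchingBalls Ω ε x dx) (hy : HasTouchingBalls Ω ε y dy)
    (hdx : ‖dx‖ = 1) (hdy : ‖dy‖ = 1) : ε * ‖dx - dy‖ ≤ ‖x - y‖ := by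
  have h₁ := two_mul_le_dist_of_ball_subset hε hx.1 hy.2
  have h₂ := two_mul_le_dist_of_ball_subset hε hy.1 hx.2
  rw [dist_eq_norm, show x - ε • dx - (y + ε • dy) = (x - y) - ε • (dx + dy) by module] at h₁
  rw [dist_eq_norm, ← norm_neg,
    show -(y - ε • dy - (x + ε • dx)) = (x - y) + ε • (dx + dy) by module] at h₂
  have hpar := parallelogram_law_with_norm ℝ (x - y) (ε • (dx + dy))
  have hunit := parallelogram_law_with_norm ℝ dx dy
  rw [norm_smul, Real.norm_eq_abs, abs_of_pos hε] at hpar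
  rw [hdx, hdy] at hunit
  rw [← sq_le_sq₀ (by positivity) (norm_nonneg _)]
  nlinarith [pow_le_pow_left₀ (by positivity) h₁ 2, pow_le_pow_left₀ (by positivity) h₂ 2]

/-- The admissible `u` form a cone of half-angle `arccos c` around `-d₀`, truncated at height
`c² ε / 16`. -/
theorem add_mem_ball_sub_smul_of_cone {x u d d₀ : E} {ε c : ℝ} (hε : 0 < ε) (hc : 0 < c)
    (hd : ‖d‖ = 1) (hdd₀ : ‖d - d₀‖ ≤ c / 4) (hu₀ : 0 < -⟪u, d₀⟫)
    (hu_cone : c * ‖u‖ ≤ -⟪u, d₀⟫) (hu_height : -⟪u, d₀⟫ ≤ c ^ 2 * ε / 16) :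
    x + u ∈ ball (x - ε • d) ε := by
  rw [add_mem_ball_sub_smul_iff hd hε]
  have h_inner : ⟪u, d⟫ ≤ 3 / 4 * ⟪u, d₀⟫ := by
    have := (real_inner_le_norm u (d - d₀)).trans (mul_le_mul_of_nonneg_left hdd₀ (norm_nonneg u))
    rw [inner_sub_right] at this
    nlinarith
  have h_norm : ‖u‖ ^ 2 ≤ -⟪u, d₀⟫ * ε / 16 := by
    have : c ^ 2 * ‖u‖ ^ 2 ≤ c ^ 2 * (-⟪u, d₀⟫ * ε / 16) := by
      nlinarith [mul_nonneg hc.le (norm_nonneg u)]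
    exact le_of_mul_le_mul_left this (by positivity)
  nlinarith

def IsLocalGraph (Ω : Set E) (x₀ d₀ : E) (ε ρ : ℝ) (φ : E → ℝ) : Prop :=
  ∀ v : E, ⟪v, d₀⟫ = 0 → ‖v‖ < ρ →
    φ v ∈ Set.Ioo (-ε) ε ∧
    ∀ t ∈ Set.Ioo (-ε) ε,
      (x₀ + v + t • d₀ ∈ frontier Ω ↔ t = φ v) ∧ (x₀ + v + t • d₀ ∈ Ω ↔ t < φ v)

namespace IsLocalGraph

variable {Ω : Set E} {x₀ d₀ v : E} {ε ρ : ℝ} {φ : E → ℝ}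

theorem mem_Ioo (hφ : IsLocalGraph Ω x₀ d₀ ε ρ φ) (hv : ⟪v, d₀⟫ = 0) (hvρ : ‖v‖ < ρ) :
    φ v ∈ Set.Ioo (-ε) ε :=
  (hφ v hv hvρ).1

theorem mem_iff (hφ : IsLocalGraph Ω x₀ d₀ ε ρ φ) (hv : ⟪v, d₀⟫ = 0) (hvρ : ‖v‖ < ρ) {t : ℝ}
    (ht : t ∈ Set.Ioo (-ε) ε) : x₀ + v + t • d₀ ∈ Ω ↔ t < φ v :=
  ((hφ v hv hvρ).2 t ht).2

theorem mem_frontier (hφ : IsLocalGraph Ω x₀ d₀ ε ρ φ) (hv : ⟪v, d₀⟫ = 0) (hvρ : ‖v‖ < ρ) :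
    x₀ + v + φ v • d₀ ∈ frontier Ω :=
  ((hφ v hv hvρ).2 _ (hφ.mem_Ioo hv hvρ)).1.2 rfl

theorem abs_le_sq_div (hφ : IsLocalGraph Ω x₀ d₀ ε ρ φ) (hx₀ : HasTouchingBalls Ω ε x₀ d₀)
    (hd₀ : ‖d₀‖ = 1) (hε : 0 < ε) (hv : ⟪v, d₀⟫ = 0) (hvρ : ‖v‖ < ρ) :
    |φ v| ≤ ‖v‖ ^ 2 / ε := by
  obtain ⟨hφ_lo, hφ_hi⟩ := hφ.mem_Ioo hv hvρ
  have hN : ‖v‖ ^ 2 = ‖v‖ ^ 2 / ε * ε := by field_simp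
  have hN₀ : 0 ≤ ‖v‖ ^ 2 / ε := by positivity
  have hpoint : ∀ t : ℝ, x₀ + v + t • d₀ = x₀ + (v + t • d₀) := fun t ↦ add_assoc _ _ _
  rw [abs_le]
  constructor
  · by_contra! h
    obtain ⟨t, hφt, ht⟩ := exists_between h
    have hmem : x₀ + v + t • d₀ ∈ Ω := by
      refine hx₀.1 ?_
      rw [hpoint, add_mem_ball_sub_smul_iff hd₀ hε, norm_add_smul_sq hv hd₀,
        inner_add_smul_self hv hd₀]
      nlinarith
    exact (lt_asymm ((hφ.mem_iff hv hvρ ⟨by linarith, by linarith⟩).1 hmem)) hφt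
  · by_contra! h
    obtain ⟨t, ht, htφ⟩ := exists_between h
    have hmem : x₀ + v + t • d₀ ∈ ball (x₀ + ε • d₀) ε := by
      rw [hpoint, add_mem_ball_add_smul_iff hd₀ hε, norm_add_smul_sq hv hd₀,
        inner_add_smul_self hv hd₀]
      nlinarith
    exact hx₀.2 hmem (subset_closure ((hφ.mem_iff hv hvρ ⟨by linarith, by linarith⟩).2 htφ))

theorem norm_sub_le_of_hasTouchingBalls (hφ : IsLocalGraph Ω x₀ d₀ ε ρ φ)
    (hx₀ : HasTouchingBalls Ω ε x₀ d₀) (hd₀ : ‖d₀‖ = 1) (hε : 0 < ε) {c : ℝ} (hc₀ : 0 ≤ c)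
    (hc₁ : c ≤ 1) (hv : ⟪v, d₀⟫ = 0) (hvρ : ‖v‖ < ρ) (hvc : 32 * ‖v‖ ^ 2 ≤ (ε * c) ^ 2) {d : E}
    (hd : ‖d‖ = 1) (hX : HasTouchingBalls Ω ε (x₀ + v + φ v • d₀) d) :
    ‖d - d₀‖ ≤ c / 4 := by
  have h := hX.mul_norm_sub_le hε hx₀ hd hd₀
  rw [show x₀ + v + φ v • d₀ - x₀ = v + φ v • d₀ by abel] at h
  have hφv : |φ v| ≤ ε * c ^ 2 / 32 :=
    (hφ.abs_le_sq_div hx₀ hd₀ hε hv hvρ).trans (by rw [div_le_iff₀ hε]; nlinarith)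
  have hX_near : ‖v + φ v • d₀‖ ≤ ε * (c / 4) := by
    rw [← sq_le_sq₀ (norm_nonneg _) (by positivity), norm_add_smul_sq hv hd₀, ← sq_abs (φ v)]
    have hc_sq : (ε * c) ^ 2 * c ^ 2 ≤ (ε * c) ^ 2 := by
      nlinarith [mul_le_one₀ hc₁ hc₀ hc₁, sq_nonneg (ε * c)]
    nlinarith [pow_le_pow_left₀ (abs_nonneg _) hφv 2]
  exact le_of_mul_le_mul_left (h.trans hX_near) hε

theorem sub_le_cot_mul_norm_sub (hφ : IsLocalGraph Ω x₀ d₀ ε ρ φ)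
    (hball : ∀ x ∈ frontier Ω, ∃ d : E, ‖d‖ = 1 ∧ HasTouchingBalls Ω ε x d)
    (hx₀ : HasTouchingBalls Ω ε x₀ d₀) (hd₀ : ‖d₀‖ = 1) (hε : 0 < ε) {α : ℝ}
    (hα : α ∈ Set.Ioo 0 (Real.pi / 2)) {w : E} (hv : ⟪v, d₀⟫ = 0) (hw : ⟪w, d₀⟫ = 0)
    (hvρ : ‖v‖ < ρ) (hwρ : ‖w‖ < ρ) (hvc : 32 * ‖v‖ ^ 2 ≤ (ε * Real.cos α) ^ 2)
    (hwc : 32 * ‖w‖ ^ 2 ≤ (ε * Real.cos α) ^ 2) :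
    φ w - φ v ≤ Real.cot α * ‖v - w‖ := by
  rw [Real.cot_eq_cos_div_sin]
  set c := Real.cos α
  set σ := Real.sin α
  have hc : 0 < c := Real.cos_pos_of_mem_Ioo ⟨by linarith [hα.1, Real.pi_pos], hα.2⟩
  have hσ : 0 < σ := Real.sin_pos_of_pos_of_lt_pi hα.1 (by linarith [hα.2, Real.pi_pos])
  obtain ⟨d, hd, hX⟩ := hball _ (hφ.mem_frontier hw hwρ)
  have hdd₀ := hφ.norm_sub_le_of_hasTouchingBalls hx₀ hd₀ hε hc.le (Real.cos_le_one α) hw hwρ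
    hwc hd hX
  by_contra! h
  obtain ⟨t, hvt, htw⟩ := exists_between (lt_sub_comm.mpr h)
  have hK : 0 ≤ c / σ * ‖v - w‖ := by positivity
  have hcs : c * ‖v - w‖ < σ * (φ w - t) := by
    rw [lt_sub_comm, div_mul_eq_mul_div, div_lt_iff₀ hσ] at htw
    linarith
  have hvw : ⟪v - w, d₀⟫ = 0 := by rw [inner_sub_left, hv, hw, sub_zero]
  set U := v - w + (t - φ w) • d₀
  have hUd₀ : -⟪U, d₀⟫ = φ w - t := by rw [inner_add_smul_self hvw hd₀]; ring
  have hU_cone : c * ‖U‖ ≤ -⟪U, d₀⟫ := by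
    rw [hUd₀, ← sq_le_sq₀ (by positivity) (by linarith), mul_pow, norm_add_smul_sq hvw hd₀]
    nlinarith [Real.sin_sq_add_cos_sq α, pow_le_pow_left₀ (by positivity) hcs.le 2]
  have hU_height : -⟪U, d₀⟫ ≤ c ^ 2 * ε / 16 := by
    have hφv := hφ.abs_le_sq_div hx₀ hd₀ hε hv hvρ
    have hφw := hφ.abs_le_sq_div hx₀ hd₀ hε hw hwρ
    have hsum : ‖v‖ ^ 2 / ε + ‖w‖ ^ 2 / ε ≤ c ^ 2 * ε / 16 := by
      rw [← add_div, div_le_iff₀ hε]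
      nlinarith
    rw [hUd₀]
    linarith [le_abs_self (φ w), neg_abs_le (φ v)]
  have hmem : x₀ + v + t • d₀ ∈ Ω := by
    have := hX.1 (add_mem_ball_sub_smul_of_cone hε hc hd hdd₀ (by linarith) hU_cone hU_height)
    rwa [show x₀ + w + φ w • d₀ + U = x₀ + v + t • d₀ by module] at this
  have ht : t ∈ Set.Ioo (-ε) ε :=
    ⟨by linarith [(hφ.mem_Ioo hv hvρ).1], by linarith [(hφ.mem_Ioo hw hwρ).2]⟩
  exact lt_asymm hvt ((hφ.mem_iff hv hvρ ht).1 hmem)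

end IsLocalGraph

end

theorem stmt_16_general {n : ℕ} (ε : ℝ) (hε : 0 < ε)
    (Ω : Set (EuclideanSpace ℝ (Fin n)))
    (hball : ∀ x ∈ frontier Ω, ∃ dx : EuclideanSpace ℝ (Fin n), ‖dx‖ = 1 ∧
      ball (x - ε • dx) ε ⊆ Ω ∧ ball (x + ε • dx) ε ⊆ (closure Ω)ᶜ)
    (x₀ : EuclideanSpace ℝ (Fin n))
    (d₀ : EuclideanSpace ℝ (Fin n)) (hd₀ : ‖d₀‖ = 1)
    (h1 : ball (x₀ - ε • d₀) ε ⊆ Ω) (h2 : ball (x₀ + ε • d₀) ε ⊆ (closure Ω)ᶜ)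
    (α : ℝ) (hα : α ∈ Set.Ioo 0 (Real.pi / 2)) (hfα : 2 * α / Real.cos α = ε)
    (φ : EuclideanSpace ℝ (Fin n) → ℝ)
    (hφ : ∀ v : EuclideanSpace ℝ (Fin n), ⟪v, d₀⟫ = 0 → ‖v‖ < Real.sqrt 3 / 2 * ε →
      φ v ∈ Set.Ioo (-ε) ε ∧
      ∀ t ∈ Set.Ioo (-ε) ε,
        (x₀ + v + t • d₀ ∈ frontier Ω ↔ t = φ v) ∧ (x₀ + v + t • d₀ ∈ Ω ↔ t < φ v)) :
    ∀ v w : EuclideanSpace ℝ (Fin n), ⟪v, d₀⟫ = 0 → ⟪w, d₀⟫ = 0 →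
      ‖v‖ ≤ Real.sqrt 2 / 4 * α → ‖w‖ ≤ Real.sqrt 2 / 4 * α →
      |φ v - φ w| ≤ (1 / Real.tan α) * ‖v - w‖ := by
  have hc : 0 < Real.cos α := Real.cos_pos_of_mem_Ioo ⟨by linarith [hα.1, Real.pi_pos], hα.2⟩
  have hεα : ε * Real.cos α = 2 * α := by rw [← hfα, div_mul_cancel₀ _ hc.ne']
  have hsmall : ∀ u : EuclideanSpace ℝ (Fin n), ‖u‖ ≤ Real.sqrt 2 / 4 * α →
      ‖u‖ < Real.sqrt 3 / 2 * ε ∧ 32 * ‖u‖ ^ 2 ≤ (ε * Real.cos α) ^ 2 := by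
    intro u hu
    have hsqrt2 := Real.sq_sqrt (show (0 : ℝ) ≤ 2 by norm_num)
    have hsqrt3 := Real.sq_sqrt (show (0 : ℝ) ≤ 3 by norm_num)
    have hu_sq := pow_le_pow_left₀ (norm_nonneg u) hu 2
    rw [mul_pow, div_pow, hsqrt2] at hu_sq
    constructor
    · have hα_le : α ≤ ε / 2 := by nlinarith [Real.cos_le_one α]
      have hsqrt2_le : √2 ≤ 2 := by nlinarith [Real.sqrt_nonneg 2]
      have hsqrt3_ge : 1 ≤ √3 := by nlinarith [Real.sqrt_nonneg 3]
      nlinarith [Real.sqrt_nonneg 2, hα.1]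
    · rw [hεα]
      linarith
  have hgraph : IsLocalGraph Ω x₀ d₀ ε (Real.sqrt 3 / 2 * ε) φ := hφ
  have hlip := fun v w hv hw hvr hwr ↦ hgraph.sub_le_cot_mul_norm_sub hball ⟨h1, h2⟩ hd₀ hε hα
    hv hw (hsmall v hvr).1 (hsmall w hwr).1 (hsmall v hvr).2 (hsmall w hwr).2
  intro v w hv hw hvr hwr
  rw [one_div, Real.tan_inv_eq_cot, abs_sub_le_iff]
  exact ⟨norm_sub_rev v w ▸ hlip w v hw hv hwr hvr, hlip v w hv hw hvr hwr⟩

/-- The local graph `φ` of `∂Ω` at `x₀` (in the frame with origin `x₀` and last axis `d₀`)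
is `(1/tan(f⁻¹(ε)))`-Lipschitz on the closed disk of radius `r̃ = (√2/4) f⁻¹(ε)`, where
`f(α) = 2α/cos α`. -/
theorem stmt_16 {n : ℕ} (hn : 2 ≤ n) (ε : ℝ) (hε : 0 < ε)
    (Ω : Set (EuclideanSpace ℝ (Fin n))) (hΩ : IsOpen Ω)
    (hball : ∀ x ∈ frontier Ω, ∃ dx : EuclideanSpace ℝ (Fin n), ‖dx‖ = 1 ∧
      ball (x - ε • dx) ε ⊆ Ω ∧ ball (x + ε • dx) ε ⊆ (closure Ω)ᶜ)
    (x₀ : EuclideanSpace ℝ (Fin n)) (hx₀ : x₀ ∈ frontier Ω)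
    (d₀ : EuclideanSpace ℝ (Fin n)) (hd₀ : ‖d₀‖ = 1)
    (h1 : ball (x₀ - ε • d₀) ε ⊆ Ω) (h2 : ball (x₀ + ε • d₀) ε ⊆ (closure Ω)ᶜ)
    (α : ℝ) (hα : α ∈ Set.Ioo 0 (Real.pi / 2)) (hfα : 2 * α / Real.cos α = ε)
    (φ : EuclideanSpace ℝ (Fin n) → ℝ) (hφ0 : φ 0 = 0)
    (hφ : ∀ v : EuclideanSpace ℝ (Fin n), ⟪v, d₀⟫ = 0 → ‖v‖ < Real.sqrt 3 / 2 * ε →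
      φ v ∈ Set.Ioo (-ε) ε ∧
      ∀ t ∈ Set.Ioo (-ε) ε,
        (x₀ + v + t • d₀ ∈ frontier Ω ↔ t = φ v) ∧ (x₀ + v + t • d₀ ∈ Ω ↔ t < φ v)) :
    ∀ v w : EuclideanSpace ℝ (Fin n), ⟪v, d₀⟫ = 0 → ⟪w, d₀⟫ = 0 →
      ‖v‖ ≤ Real.sqrt 2 / 4 * α → ‖w‖ ≤ Real.sqrt 2 / 4 * α →
      |φ v - φ w| ≤ (1 / Real.tan α) * ‖v - w‖ :=
  stmt_16_general ε hε Ω hball x₀ d₀ hd₀ h1 h2 α hα hfα φ hφ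
end

section
/- Let S ⊆ ℝⁿ be a nonempty compact C^{1,1}-hypersurface: S = ∂Ω for an open set Ω such that around each boundary point, in a suitable orthonormal frame, ∂Ω is the graph of a C¹ function φ : D_r(0') → (−a, a) with φ(0') = 0, ∇φ(0') = 0, and both φ and ∇φ L-Lipschitz, with Ω lying below the graph. Then there exists ε > 0 such that Ω satisfies the ε-ball condition. -/
/-!
Near a boundary point, `∂Ω` is the graph of `φ` over the hyperplane `ν^⊥`. Since `∇φ` is
`L`-Lipschitz, the graph lies above the paraboloid `φ v + ⟪∇φ v, w - v⟫ - L‖w - v‖²`, and a ball of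
radius `ε ≤ 1/(2L)` touching the graph at `v` from below lies under that paraboloid, hence in `Ω`;
replacing `(ν, φ)` by `(-ν, -φ)` gives the outer ball. The admissible radius is uniform near each
boundary point, and compactness of `∂Ω` makes it uniform on `∂Ω`.
-/

open Metric Set Filter Topology
open scoped RealInnerProductSpace

theorem IsCompact.exists_pos_forall_of_forall_eventually {X : Type*} [TopologicalSpace X]
    {K : Set X} (hK : IsCompact K) {Q : ℝ → X → Prop}
    (hmono : ∀ ⦃ε ε' : ℝ⦄ ⦃x : X⦄, ε ≤ ε' → Q ε' x → Q ε x)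
    (hloc : ∀ x ∈ K, ∃ ε > 0, ∀ᶠ y in 𝓝 x, y ∈ K → Q ε y) :
    ∃ ε > 0, ∀ x ∈ K, Q ε x := by
  refine hK.induction_on (p := fun s => ∃ ε > 0, ∀ x ∈ s, Q ε x) ⟨1, one_pos, by simp⟩
    (fun s t hst ⟨ε, hε, ht⟩ => ⟨ε, hε, fun x hx => ht x (hst hx)⟩)
    (fun s t ⟨ε, hε, hs⟩ ⟨δ, hδ, ht⟩ => ⟨min ε δ, lt_min hε hδ, fun x hx => hx.elim
      (fun hx => hmono (min_le_left _ _) (hs x hx))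
      (fun hx => hmono (min_le_right _ _) (ht x hx))⟩)
    (fun x hx => ?_)
  obtain ⟨ε, hε, hQ⟩ := hloc x hx
  exact ⟨_, inter_mem_nhdsWithin K hQ, ε, hε, fun y hy => hy.2 hy.1⟩

section

variable {E : Type*} [NormedAddCommGroup E] [InnerProductSpace ℝ E]

theorem Convex.abs_sub_sub_inner_le_of_lipschitz_gradient {s : Set E} (hs : Convex ℝ s)
    {φ : E → ℝ} {G : E → E} {L : ℝ} (hL : 0 ≤ L)
    (hφ : ∀ z ∈ s, HasFDerivWithinAt φ (innerSL ℝ (G z)) s z)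
    (hG : ∀ z ∈ s, ∀ w ∈ s, ‖G z - G w‖ ≤ L * ‖z - w‖) {v w : E} (hv : v ∈ s) (hw : w ∈ s) :
    |φ w - φ v - ⟪G v, w - v⟫| ≤ L * ‖w - v‖ ^ 2 := by
  have hseg : segment ℝ v w ⊆ s := hs.segment_subset hv hw
  have hnear : segment ℝ v w ⊆ closedBall v ‖w - v‖ :=
    (convex_closedBall v _).segment_subset (mem_closedBall_self (norm_nonneg _))
      (by rw [mem_closedBall, dist_eq_norm])
  have hmvt := (convex_segment v w).norm_image_sub_le_of_norm_hasFDerivWithin_le'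
    (f' := fun z => innerSL ℝ (G z)) (φ := innerSL ℝ (G v)) (C := L * ‖w - v‖)
    (fun z hz => (hφ z (hseg hz)).mono hseg)
    (fun z hz => by
      rw [← map_sub, innerSL_apply_norm]
      exact (hG z (hseg hz) v hv).trans
        (by gcongr; exact mem_closedBall_iff_norm.mp (hnear hz)))
    (left_mem_segment ℝ v w) (right_mem_segment ℝ v w)
  simpa [sq, mul_assoc] using hmvt

theorem mem_ball_sub_smul_iff {ν : E} (hν : ‖ν‖ = 1) {ε : ℝ} (hε : 0 ≤ ε) (x y : E) :
    x ∈ ball (y - ε • ν) ε ↔ ‖x - y‖ ^ 2 + 2 * ε * ⟪x - y, ν⟫ < 0 := by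
  rw [mem_ball, dist_eq_norm, ← sq_lt_sq₀ (norm_nonneg _) hε,
    show x - (y - ε • ν) = (x - y) + ε • ν by abel, norm_add_sq_real, norm_smul,
    real_inner_smul_right, hν, Real.norm_eq_abs, abs_of_nonneg hε, mul_one]
  constructor <;> intro h <;> linarith

theorem norm_add_smul_sq_of_inner_eq_zero_s18 {ν z : E} (hν : ‖ν‖ = 1) (hz : ⟪z, ν⟫ = 0) (t : ℝ) :
    ‖z + t • ν‖ ^ 2 = ‖z‖ ^ 2 + t ^ 2 := by
  rw [norm_add_sq_real, real_inner_smul_right, hz, norm_smul, hν, Real.norm_eq_abs, mul_one,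
    sq_abs]
  ring

theorem exists_inner_eq_zero_add_smul {ν : E} (hν : ‖ν‖ = 1) (x : E) :
    ∃ z : E, ∃ t : ℝ, ⟪z, ν⟫ = 0 ∧ x = z + t • ν :=
  ⟨x - ⟪x, ν⟫ • ν, ⟪x, ν⟫,
    by rw [inner_sub_left, real_inner_smul_left, real_inner_self_eq_norm_sq, hν]; ring,
    by abel⟩

def BallConditionAt (Ω : Set E) (ε : ℝ) (x : E) : Prop :=
  ∃ d : E, ‖d‖ = 1 ∧ ball (x - ε • d) ε ⊆ Ω ∧ ball (x + ε • d) ε ⊆ (closure Ω)ᶜ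

theorem ball_sub_smul_subset_ball_sub_smul {d : E} (hd : ‖d‖ = 1) (x : E) {ε ε' : ℝ}
    (hε : ε ≤ ε') : ball (x - ε • d) ε ⊆ ball (x - ε' • d) ε' := by
  refine ball_subset_ball' ?_
  rw [dist_eq_norm, sub_sub_sub_cancel_left, ← sub_smul, norm_smul, hd, mul_one,
    Real.norm_eq_abs, abs_of_nonneg (sub_nonneg.2 hε)]
  linarith

theorem BallConditionAt.mono {Ω : Set E} {ε ε' : ℝ} {x : E} (h : BallConditionAt Ω ε' x)
    (hε : ε ≤ ε') : BallConditionAt Ω ε x := by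
  obtain ⟨d, hd, hin, hout⟩ := h
  refine ⟨d, hd, (ball_sub_smul_subset_ball_sub_smul hd x hε).trans hin, ?_⟩
  simp_rw [← sub_neg_eq_add, ← smul_neg] at hout ⊢
  exact (ball_sub_smul_subset_ball_sub_smul (by rwa [norm_neg]) x hε).trans hout

/-- `φ` is a `C^{1,1}` function on the open `r`-disc of the hyperplane `ν^⊥`, with gradient `G`;
its graph is `{v + φ v • ν}`. -/
structure IsC11Graph (ν : E) (r L : ℝ) (φ : E → ℝ) (G : E → E) : Prop where
  norm_eq_one : ‖ν‖ = 1
  nonneg : 0 ≤ L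
  map_zero : φ 0 = 0
  inner_grad : ∀ v, ⟪v, ν⟫ = 0 → ‖v‖ < r → ⟪G v, ν⟫ = 0
  hasFDerivWithinAt : ∀ v, ⟪v, ν⟫ = 0 → ‖v‖ < r →
    HasFDerivWithinAt φ (innerSL ℝ (G v)) {w | ⟪w, ν⟫ = 0} v
  abs_sub_le : ∀ v w, ⟪v, ν⟫ = 0 → ⟪w, ν⟫ = 0 → ‖v‖ < r → ‖w‖ < r →
    |φ v - φ w| ≤ L * ‖v - w‖
  norm_grad_sub_le : ∀ v w, ⟪v, ν⟫ = 0 → ⟪w, ν⟫ = 0 → ‖v‖ < r → ‖w‖ < r →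
    ‖G v - G w‖ ≤ L * ‖v - w‖

noncomputable def graphNormal (ν : E) (G : E → E) (v : E) : E := ‖ν - G v‖⁻¹ • (ν - G v)

theorem graphNormal_neg (ν : E) (G : E → E) (v : E) :
    graphNormal (-ν) (-G) v = -graphNormal ν G v := by
  rw [graphNormal, graphNormal, Pi.neg_apply, neg_sub_neg, ← neg_sub, norm_neg, smul_neg]

namespace IsC11Graph

variable {ν : E} {r L : ℝ} {φ : E → ℝ} {G : E → E}

theorem neg (h : IsC11Graph ν r L φ G) : IsC11Graph (-ν) r L (-φ) (-G) := by
  have hperp : ∀ v : E, ⟪v, -ν⟫ = 0 ↔ ⟪v, ν⟫ = 0 := by simp [inner_neg_right]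
  refine ⟨by rw [norm_neg, h.norm_eq_one], h.nonneg, by simp [h.map_zero], ?_, ?_, ?_, ?_⟩
  · intro v hv hvr
    simpa using h.inner_grad v ((hperp v).1 hv) hvr
  · intro v hv hvr
    simp_rw [hperp, Pi.neg_apply, map_neg]
    exact (h.hasFDerivWithinAt v ((hperp v).1 hv) hvr).neg
  · intro v w hv hw hvr hwr
    rw [Pi.neg_apply, Pi.neg_apply, neg_sub_neg, abs_sub_comm]
    exact h.abs_sub_le v w ((hperp v).1 hv) ((hperp w).1 hw) hvr hwr
  · intro v w hv hw hvr hwr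
    rw [Pi.neg_apply, Pi.neg_apply, neg_sub_neg, norm_sub_rev]
    exact h.norm_grad_sub_le v w ((hperp v).1 hv) ((hperp w).1 hw) hvr hwr

theorem abs_le_mul_norm (h : IsC11Graph ν r L φ G) {v : E} (hv : ⟪v, ν⟫ = 0) (hvr : ‖v‖ < r) :
    |φ v| ≤ L * ‖v‖ := by
  simpa [h.map_zero] using
    h.abs_sub_le v 0 hv (inner_zero_left ν) hvr (by simpa using (norm_nonneg v).trans_lt hvr)

theorem tangent_paraboloid_le (h : IsC11Graph ν r L φ G) {v w : E} (hv : ⟪v, ν⟫ = 0)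
    (hw : ⟪w, ν⟫ = 0) (hvr : ‖v‖ < r) (hwr : ‖w‖ < r) :
    φ v + ⟪G v, w - v⟫ - L * ‖w - v‖ ^ 2 ≤ φ w := by
  set s := {z : E | ⟪z, ν⟫ = 0} ∩ ball 0 r
  have hs : Convex ℝ s := by
    refine Convex.inter ?_ (convex_ball 0 r)
    simpa only [ContinuousLinearMap.coe_coe, innerSL_apply_apply, real_inner_comm ν] using
      convex_hyperplane (innerSL ℝ ν).toLinearMap.isLinear 0
  have hmem : ∀ {z : E}, ⟪z, ν⟫ = 0 → ‖z‖ < r → z ∈ s := fun hz hzr => ⟨hz, mem_ball_zero_iff.2 hzr⟩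
  have htaylor := hs.abs_sub_sub_inner_le_of_lipschitz_gradient h.nonneg
    (fun z hz => (h.hasFDerivWithinAt z hz.1 (mem_ball_zero_iff.1 hz.2)).mono inter_subset_left)
    (fun z hz w hw => h.norm_grad_sub_le z w hz.1 hw.1 (mem_ball_zero_iff.1 hz.2)
      (mem_ball_zero_iff.1 hw.2))
    (hmem hv hvr) (hmem hw hwr)
  linarith [neg_abs_le (φ w - φ v - ⟪G v, w - v⟫)]

theorem one_le_norm_sub (h : IsC11Graph ν r L φ G) {v : E} (hv : ⟪v, ν⟫ = 0) (hvr : ‖v‖ < r) :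
    1 ≤ ‖ν - G v‖ := by
  have := real_inner_le_norm (ν - G v) ν
  rwa [inner_sub_left, real_inner_self_eq_norm_sq, h.inner_grad v hv hvr, h.norm_eq_one,
    one_pow, sub_zero, mul_one] at this

theorem norm_graphNormal (h : IsC11Graph ν r L φ G) {v : E} (hv : ⟪v, ν⟫ = 0) (hvr : ‖v‖ < r) :
    ‖graphNormal ν G v‖ = 1 :=
  norm_smul_inv_norm (norm_pos_iff.mp (one_pos.trans_le (h.one_le_norm_sub hv hvr)))

theorem ball_sub_smul_graphNormal_subset (h : IsC11Graph ν r L φ G) {T : Set E} {x₀ v : E} {a ε : ℝ}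
    (hT : ∀ w t, ⟪w, ν⟫ = 0 → ‖w‖ < r → t ∈ Ioo (-a) a → t < φ w → x₀ + w + t • ν ∈ T)
    (hv : ⟪v, ν⟫ = 0) (hε : 0 < ε) (hLε : 2 * L * ε ≤ 1) (hr : ‖v‖ + 2 * ε < r)
    (ha : L * ‖v‖ + 2 * ε < a) :
    ball (x₀ + v + φ v • ν - ε • graphNormal ν G v) ε ⊆ T := by
  intro p hp
  set y := x₀ + v + φ v • ν
  have hvr : ‖v‖ < r := by linarith
  obtain ⟨u, D, hu, hpy⟩ := exists_inner_eq_zero_add_smul h.norm_eq_one (p - y)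
  have hsq : ‖p - y‖ ^ 2 = ‖u‖ ^ 2 + D ^ 2 := by
    rw [hpy, norm_add_smul_sq_of_inner_eq_zero_s18 h.norm_eq_one hu]
  have hnear : ‖p - y‖ < 2 * ε := by
    rw [← dist_eq_norm]
    calc dist p y ≤ dist p (y - ε • graphNormal ν G v) + dist (y - ε • graphNormal ν G v) y :=
          dist_triangle _ _ _
      _ < ε + ε := by
          refine add_lt_add_of_lt_of_le (mem_ball.mp hp) (le_of_eq ?_)
          rw [dist_eq_norm, sub_sub_cancel_left, norm_neg, norm_smul, h.norm_graphNormal hv hvr,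
            Real.norm_eq_abs, abs_of_pos hε, mul_one]
      _ = 2 * ε := by ring
  have hu2 : ‖u‖ < 2 * ε := by
    refine lt_of_le_of_lt (le_of_sq_le_sq ?_ (norm_nonneg _)) hnear
    nlinarith [sq_nonneg D]
  have hD := abs_le_of_sq_le_sq' (b := ‖p - y‖) (a := D) (by nlinarith [sq_nonneg ‖u‖])
    (norm_nonneg _)
  have hkey : D - ⟪G v, u⟫ < -(L * ‖u‖ ^ 2) := by
    set X := D - ⟪G v, u⟫
    have hs := h.one_le_norm_sub hv hvr
    have hinner : ⟪p - y, graphNormal ν G v⟫ = ‖ν - G v‖⁻¹ * X := by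
      rw [hpy, graphNormal, real_inner_smul_right, inner_add_left, inner_sub_right, inner_sub_right,
        real_inner_smul_left, real_inner_smul_left, hu, real_inner_self_eq_norm_sq,
        h.norm_eq_one, real_inner_comm (G v) ν, h.inner_grad v hv hvr, real_inner_comm (G v) u]
      ring
    have hball := (mem_ball_sub_smul_iff (h.norm_graphNormal hv hvr) hε.le p y).1 hp
    rw [hinner, hsq] at hball
    have h2εX : 2 * ε * X < -‖u‖ ^ 2 := by
      have : 2 * ε * X = ‖ν - G v‖ * (2 * ε * (‖ν - G v‖⁻¹ * X)) := by
        field_simp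
      rw [this]
      nlinarith [sq_nonneg D, sq_nonneg ‖u‖]
    refine lt_of_mul_lt_mul_left ?_ (by positivity : (0 : ℝ) ≤ 2 * ε)
    nlinarith [sq_nonneg ‖u‖]
  have hw : ⟪v + u, ν⟫ = 0 := by rw [inner_add_left, hv, hu, add_zero]
  have hwr : ‖v + u‖ < r := (norm_add_le v u).trans_lt (by linarith)
  have hφv := abs_le.mp (h.abs_le_mul_norm hv hvr)
  have htaylor := h.tangent_paraboloid_le hv hw hvr hwr
  rw [add_sub_cancel_left] at htaylor
  have hp : p = x₀ + (v + u) + (φ v + D) • ν := by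
    rw [← sub_add_cancel p y, hpy]
    module
  rw [hp]
  exact hT _ _ hw hwr ⟨by nlinarith [norm_nonneg v], by nlinarith [norm_nonneg v]⟩ (by linarith)

theorem ballConditionAt (h : IsC11Graph ν r L φ G) {Ω : Set E} {x₀ v : E} {a ε : ℝ}
    (hchart : ∀ w, ⟪w, ν⟫ = 0 → ‖w‖ < r → ∀ t ∈ Ioo (-a) a,
      (x₀ + w + t • ν ∈ frontier Ω ↔ t = φ w) ∧ (x₀ + w + t • ν ∈ Ω ↔ t < φ w))
    (hv : ⟪v, ν⟫ = 0) (hε : 0 < ε) (hLε : 2 * L * ε ≤ 1) (hr : ‖v‖ + 2 * ε < r)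
    (ha : L * ‖v‖ + 2 * ε < a) :
    BallConditionAt Ω ε (x₀ + v + φ v • ν) := by
  have hvr : ‖v‖ < r := by linarith
  have hin : ∀ w t, ⟪w, ν⟫ = 0 → ‖w‖ < r → t ∈ Ioo (-a) a → t < φ w →
      x₀ + w + t • ν ∈ Ω :=
    fun w t hw hwr ht hlt => ((hchart w hw hwr t ht).2).mpr hlt
  have hout : ∀ w t, ⟪w, -ν⟫ = 0 → ‖w‖ < r → t ∈ Ioo (-a) a → t < (-φ) w →
      x₀ + w + t • -ν ∈ (closure Ω)ᶜ := by
    intro w t hw hwr ht hlt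
    rw [inner_neg_right, neg_eq_zero] at hw
    rw [Pi.neg_apply, lt_neg] at hlt
    have hnt : -t ∈ Ioo (-a) a := ⟨neg_lt_neg ht.2, by linarith [ht.1]⟩
    obtain ⟨hfr, hΩ⟩ := hchart w hw hwr (-t) hnt
    rw [smul_neg, ← neg_smul, closure_eq_self_union_frontier, mem_compl_iff, mem_union, hΩ, hfr]
    rintro (hlt' | heq) <;> linarith
  have hext := h.neg.ball_sub_smul_graphNormal_subset hout
    (by rwa [inner_neg_right, neg_eq_zero]) hε hLε hr ha
  rw [graphNormal_neg, Pi.neg_apply, neg_smul_neg, smul_neg, sub_neg_eq_add] at hext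
  exact ⟨graphNormal ν G v, h.norm_graphNormal hv hvr,
    h.ball_sub_smul_graphNormal_subset hin hv hε hLε hr ha, hext⟩

theorem exists_pos_eventually_ballConditionAt (h : IsC11Graph ν r L φ G) {Ω : Set E} {x₀ : E}
    {a : ℝ} (ha : 0 < a) (hr : 0 < r)
    (hchart : ∀ w, ⟪w, ν⟫ = 0 → ‖w‖ < r → ∀ t ∈ Ioo (-a) a,
      (x₀ + w + t • ν ∈ frontier Ω ↔ t = φ w) ∧ (x₀ + w + t • ν ∈ Ω ↔ t < φ w)) :
    ∃ ε > 0, ∀ᶠ y in 𝓝 x₀, y ∈ frontier Ω → BallConditionAt Ω ε y := by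
  set m := min r a
  set ε := min (1 / (2 * (L + 1))) (m / 4)
  set ρ := m / (2 * (L + 1))
  have hL := h.nonneg
  have hm : 0 < m := lt_min hr ha
  have hε : 0 < ε := by positivity
  have hρ : 0 < ρ := by positivity
  have hρm : ρ ≤ m / 2 := div_le_div_of_nonneg_left hm.le two_pos (by linarith)
  have hLρ : L * ρ < m / 2 := by
    rw [mul_div_assoc', div_lt_div_iff₀ (by positivity) two_pos]
    nlinarith
  refine ⟨ε, hε, ?_⟩
  filter_upwards [ball_mem_nhds x₀ hρ] with y hy hyΩ
  obtain ⟨v, t, hv, hyv⟩ := exists_inner_eq_zero_add_smul h.norm_eq_one (y - x₀)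
  have hsq : ‖v‖ ^ 2 + t ^ 2 < ρ ^ 2 := by
    rw [← norm_add_smul_sq_of_inner_eq_zero_s18 h.norm_eq_one hv, ← hyv, ← dist_eq_norm]
    exact pow_lt_pow_left₀ (mem_ball.mp hy) dist_nonneg two_ne_zero
  have hvρ : ‖v‖ < ρ := lt_of_pow_lt_pow_left₀ 2 hρ.le (by nlinarith [sq_nonneg t])
  have htρ := abs_lt_of_sq_lt_sq' (a := t) (by nlinarith [sq_nonneg ‖v‖]) hρ.le
  have hmr : m ≤ r := min_le_left r a
  have hma : m ≤ a := min_le_right r a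
  have hεL : ε ≤ 1 / (2 * (L + 1)) := min_le_left _ _
  have hεm : ε ≤ m / 4 := min_le_right _ _
  have hvr : ‖v‖ < r := by linarith
  have hy_eq : y = x₀ + v + t • ν := by rw [add_assoc, ← hyv, add_sub_cancel]
  have ht : t = φ v := ((hchart v hv hvr t ⟨by linarith, by linarith⟩).1).mp (hy_eq ▸ hyΩ)
  rw [hy_eq, ht]
  refine h.ballConditionAt hchart hv hε ?_ (by linarith) ?_
  · calc 2 * L * ε ≤ 2 * (L + 1) * (1 / (2 * (L + 1))) := by gcongr; linarith
      _ = 1 := by field_simp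
  · nlinarith [mul_le_mul_of_nonneg_left hvρ.le hL]

end IsC11Graph

end

theorem stmt_18_general {n : ℕ} (Ω : Set (EuclideanSpace ℝ (Fin n)))
    (hcpt : IsCompact (frontier Ω))
    (hgraph : ∀ x₀ ∈ frontier Ω,
      ∃ (dv : EuclideanSpace ℝ (Fin n)) (a r L : ℝ)
        (φ : EuclideanSpace ℝ (Fin n) → ℝ)
        (G : EuclideanSpace ℝ (Fin n) → EuclideanSpace ℝ (Fin n)),
        ‖dv‖ = 1 ∧ 0 < a ∧ 0 < r ∧ 0 < L ∧
        φ 0 = 0 ∧ G 0 = 0 ∧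
        (∀ v : EuclideanSpace ℝ (Fin n), ⟪v, dv⟫ = 0 → ‖v‖ < r →
          (φ v ∈ Set.Ioo (-a) a ∧ ⟪G v, dv⟫ = 0 ∧
            HasFDerivWithinAt φ (innerSL ℝ (G v))
              {w : EuclideanSpace ℝ (Fin n) | ⟪w, dv⟫ = 0} v ∧
            (∀ t ∈ Set.Ioo (-a) a,
              (x₀ + v + t • dv ∈ frontier Ω ↔ t = φ v) ∧
              (x₀ + v + t • dv ∈ Ω ↔ t < φ v)))) ∧
        (∀ v w : EuclideanSpace ℝ (Fin n), ⟪v, dv⟫ = 0 → ⟪w, dv⟫ = 0 →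
          ‖v‖ < r → ‖w‖ < r →
          |φ v - φ w| ≤ L * ‖v - w‖ ∧ ‖G v - G w‖ ≤ L * ‖v - w‖)) :
    ∃ ε : ℝ, 0 < ε ∧ ∀ x ∈ frontier Ω, ∃ dx : EuclideanSpace ℝ (Fin n), ‖dx‖ = 1 ∧
      ball (x - ε • dx) ε ⊆ Ω ∧ ball (x + ε • dx) ε ⊆ (closure Ω)ᶜ := by
  refine hcpt.exists_pos_forall_of_forall_eventually (Q := BallConditionAt Ω)
    (fun _ _ _ hle h => h.mono hle) fun x₀ hx₀ => ?_
  obtain ⟨ν, a, r, L, φ, G, hν, ha, hr, hL, hφ0, -, hchart, hlip⟩ := hgraph x₀ hx₀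
  have hC : IsC11Graph ν r L φ G :=
    { norm_eq_one := hν
      nonneg := hL.le
      map_zero := hφ0
      inner_grad := fun v hv hvr => (hchart v hv hvr).2.1
      hasFDerivWithinAt := fun v hv hvr => (hchart v hv hvr).2.2.1
      abs_sub_le := fun v w hv hw hvr hwr => (hlip v w hv hw hvr hwr).1
      norm_grad_sub_le := fun v w hv hw hvr hwr => (hlip v w hv hw hvr hwr).2 }
  exact hC.exists_pos_eventually_ballConditionAt ha hr fun v hv hvr => (hchart v hv hvr).2.2.2

/-- If `S = ∂Ω` is a nonempty compact `C^{1,1}`-hypersurface — around each boundary point,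
in a suitable orthonormal frame, `∂Ω` is the graph of a `C¹` function `φ` with `φ(0') = 0`,
`∇φ(0') = 0`, and `φ`, `∇φ` Lipschitz, with `Ω` lying below the graph — then `Ω` satisfies
the ε-ball condition for some `ε > 0`. -/
theorem stmt_18 {n : ℕ} (hn : 2 ≤ n) (Ω : Set (EuclideanSpace ℝ (Fin n)))
    (hΩ : IsOpen Ω) (hfr : (frontier Ω).Nonempty) (hcpt : IsCompact (frontier Ω))
    (hgraph : ∀ x₀ ∈ frontier Ω,
      ∃ (dv : EuclideanSpace ℝ (Fin n)) (a r L : ℝ)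
        (φ : EuclideanSpace ℝ (Fin n) → ℝ)
        (G : EuclideanSpace ℝ (Fin n) → EuclideanSpace ℝ (Fin n)),
        ‖dv‖ = 1 ∧ 0 < a ∧ 0 < r ∧ 0 < L ∧
        φ 0 = 0 ∧ G 0 = 0 ∧
        (∀ v : EuclideanSpace ℝ (Fin n), ⟪v, dv⟫ = 0 → ‖v‖ < r →
          (φ v ∈ Set.Ioo (-a) a ∧ ⟪G v, dv⟫ = 0 ∧
            HasFDerivWithinAt φ (innerSL ℝ (G v))
              {w : EuclideanSpace ℝ (Fin n) | ⟪w, dv⟫ = 0} v ∧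
            (∀ t ∈ Set.Ioo (-a) a,
              (x₀ + v + t • dv ∈ frontier Ω ↔ t = φ v) ∧
              (x₀ + v + t • dv ∈ Ω ↔ t < φ v)))) ∧
        (∀ v w : EuclideanSpace ℝ (Fin n), ⟪v, dv⟫ = 0 → ⟪w, dv⟫ = 0 →
          ‖v‖ < r → ‖w‖ < r →
          |φ v - φ w| ≤ L * ‖v - w‖ ∧ ‖G v - G w‖ ≤ L * ‖v - w‖)) :
    ∃ ε : ℝ, 0 < ε ∧ ∀ x ∈ frontier Ω, ∃ dx : EuclideanSpace ℝ (Fin n), ‖dx‖ = 1 ∧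
      ball (x - ε • dx) ε ⊆ Ω ∧ ball (x + ε • dx) ε ⊆ (closure Ω)ᶜ :=
  stmt_18_general Ω hcpt hgraph
end
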